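/- arXiv:2203.13115 — 5 statements merged into one kernel-verified Lean document; each statement's English description precedes it below -/
import Mathlib

section
/- Let Φ : T³ → T³ be a smooth diffeomorphism with det ∇Φ ≡ 1, and set A := (∇Φ)^{−1}, the pointwise inverse of the Jacobian matrix (∇Φ)_{ij} = ∂_j Φ_i. Let M : T³ → ℝ^{3×3} be a smooth symmetric matrix field which is divergence-free, i.e. Σ_l ∂_l M_{ml} = 0 for each m. Then for each i = 1,2,3, Σ_j ∂_j [ (A (M∘Φ) A^T)_{ij} ] = Σ_{j,l,m} A_{jl} (M_{ml}∘Φ) ∂_j A_{im}. -/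
/-!
Since `det ∇Φ = 1`, the inverse `A = (∇Φ)⁻¹` is the adjugate of `∇Φ`. The product rule splits
`∂_j (A (M∘Φ) Aᵀ)_{ij}` into three terms. In the one differentiating `M∘Φ`, the chain rule and
`(∇Φ) A = 1` collapse `Σ_j ∂_j(M_{ml}∘Φ) A_{jl}` to `(∂_l M_{ml})∘Φ`, so this term is
`Σ_m A_{im} (div M)_m∘Φ = 0`. The one differentiating the second factor `Aᵀ` contains
`Σ_j ∂_j A_{jl}`, which vanishes by the Piola identity: the adjugate of a gradient has
divergence-free columns, by symmetry of second derivatives. The remaining term is the right-hand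
side.
-/

noncomputable section

/-- The `j`-th standard basis vector of `ℝ³`. -/
def e3 (j : Fin 3) : Fin 3 → ℝ := Pi.single j 1

/-- The Jacobian matrix `(∇Φ)_{ij} = ∂_j Φ_i`. -/
def jac (Φ : (Fin 3 → ℝ) → (Fin 3 → ℝ)) (x : Fin 3 → ℝ) : Matrix (Fin 3) (Fin 3) ℝ :=
  Matrix.of fun i j => fderiv ℝ Φ x (e3 j) i

open Matrix Finset

section Calculus

variable {E : Type*} [NormedAddCommGroup E] [NormedSpace ℝ E] {x v : E}

lemma ContDiff.differentiableAt_fderiv {F : Type*} [NormedAddCommGroup F] [NormedSpace ℝ F]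
    {f : E → F} (hf : ContDiff ℝ 2 f) (x : E) : DifferentiableAt ℝ (fderiv ℝ f) x :=
  ((hf.fderiv_right (m := 1) le_rfl).differentiable one_ne_zero).differentiableAt

lemma fderiv_mul_sub_mul_apply {f g h k : E → ℝ} (hf : DifferentiableAt ℝ f x)
    (hg : DifferentiableAt ℝ g x) (hh : DifferentiableAt ℝ h x) (hk : DifferentiableAt ℝ k x) :
    fderiv ℝ (fun y => f y * g y - h y * k y) x v =
      fderiv ℝ f x v * g x + f x * fderiv ℝ g x v
        - (fderiv ℝ h x v * k x + h x * fderiv ℝ k x v) := by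
  rw [((hf.hasFDerivAt.fun_mul hg.hasFDerivAt).fun_sub
    (hh.hasFDerivAt.fun_mul hk.hasFDerivAt)).fderiv]
  simp only [_root_.sub_apply, _root_.add_apply, _root_.smul_apply, smul_eq_mul]
  ring

lemma fderiv_mul_mul_transpose_apply {n : Type*} [Fintype n] {A N : E → Matrix n n ℝ}
    (hA : ∀ a b, DifferentiableAt ℝ (fun y => A y a b) x)
    (hN : ∀ a b, DifferentiableAt ℝ (fun y => N y a b) x) (i j : n) :
    fderiv ℝ (fun y => (A y * N y * (A y)ᵀ) i j) x v =
      ∑ k, ∑ m, (fderiv ℝ (fun y => A y i m) x v * N x m k * A x j k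
        + A x i m * fderiv ℝ (fun y => N y m k) x v * A x j k
        + A x i m * N x m k * fderiv ℝ (fun y => A y j k) x v) := by
  have hexp : (fun y => (A y * N y * (A y)ᵀ) i j)
      = fun y => ∑ k, ∑ m, A y i m * N y m k * A y j k := by
    ext y
    simp [mul_apply, sum_mul]
  have hderiv := HasFDerivAt.fun_sum (u := univ) fun k _ => HasFDerivAt.fun_sum (u := univ) fun m _ =>
    ((hA i m).hasFDerivAt.fun_mul (hN m k).hasFDerivAt).fun_mul (hA j k).hasFDerivAt
  rw [hexp, hderiv.fderiv]
  simp only [smul_add, _root_.sum_apply, _root_.add_apply, _root_.smul_apply, smul_eq_mul]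
  exact sum_congr rfl fun k _ => sum_congr rfl fun m _ => by ring

end Calculus

lemma sum_apply_e3_mul (L : (Fin 3 → ℝ) →L[ℝ] ℝ) (w : Fin 3 → ℝ) :
    ∑ j, L (e3 j) * w j = L w := by
  conv_rhs => rw [← (Pi.basisFun ℝ (Fin 3)).sum_repr w]
  simp [map_sum, e3, mul_comm]

lemma fderiv_apply_eq_jac_mulVec (Φ : (Fin 3 → ℝ) → (Fin 3 → ℝ)) (x v : Fin 3 → ℝ) :
    fderiv ℝ Φ x v = jac Φ x *ᵥ v :=
  (LinearMap.toMatrix'_mulVec (fderiv ℝ Φ x : (Fin 3 → ℝ) →ₗ[ℝ] (Fin 3 → ℝ)) v).symm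

lemma sum_fderiv_comp_mul_of_jac_mul_eq_one {Φ : (Fin 3 → ℝ) → (Fin 3 → ℝ)} {g : (Fin 3 → ℝ) → ℝ}
    {x : Fin 3 → ℝ} (hΦ : DifferentiableAt ℝ Φ x) (hg : DifferentiableAt ℝ g (Φ x))
    {B : Matrix (Fin 3) (Fin 3) ℝ} (hB : jac Φ x * B = 1) (k : Fin 3) :
    ∑ j, fderiv ℝ (fun y => g (Φ y)) x (e3 j) * B j k = fderiv ℝ g (Φ x) (e3 k) := by
  have hcol : (fun j => B j k) = B *ᵥ e3 k := by ext j; simp [e3]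
  rw [sum_apply_e3_mul, fderiv_fun_comp x hg hΦ, ContinuousLinearMap.comp_apply,
    fderiv_apply_eq_jac_mulVec, hcol, mulVec_mulVec, hB, one_mulVec]

lemma sum_mul_fderiv_comp_mul_eq_zero {Φ : (Fin 3 → ℝ) → (Fin 3 → ℝ)}
    {G : (Fin 3 → ℝ) → Matrix (Fin 3) (Fin 3) ℝ} {x : Fin 3 → ℝ} (hΦ : DifferentiableAt ℝ Φ x)
    (hG : ∀ m k, DifferentiableAt ℝ (fun z => G z m k) (Φ x))
    (hdiv : ∀ m, ∑ k, fderiv ℝ (fun z => G z m k) (Φ x) (e3 k) = 0)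
    {B : Matrix (Fin 3) (Fin 3) ℝ} (hB : jac Φ x * B = 1) (c : Fin 3 → ℝ) :
    ∑ j, ∑ k, ∑ m, c m * fderiv ℝ (fun y => G (Φ y) m k) x (e3 j) * B j k = 0 :=
  calc _ = ∑ m, c m * ∑ k, ∑ j, fderiv ℝ (fun y => G (Φ y) m k) x (e3 j) * B j k := by
        simp only [mul_sum, mul_assoc]
        exact sum_comm.trans ((sum_congr rfl fun _ _ => sum_comm).trans sum_comm)
    _ = 0 := by
        simp only [sum_fderiv_comp_mul_of_jac_mul_eq_one hΦ (hG _ _) hB, hdiv, mul_zero,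
          sum_const_zero]

lemma hasFDerivAt_jac_apply {Φ : (Fin 3 → ℝ) → (Fin 3 → ℝ)} {x : Fin 3 → ℝ}
    (hΦ : DifferentiableAt ℝ (fderiv ℝ Φ) x) (a b : Fin 3) :
    HasFDerivAt (fun y => jac Φ y a b)
      (((ContinuousLinearMap.proj a).comp (ContinuousLinearMap.apply ℝ (Fin 3 → ℝ) (e3 b))).comp
        (fderiv ℝ (fderiv ℝ Φ) x)) x :=
  ((ContinuousLinearMap.proj a).comp
    (ContinuousLinearMap.apply ℝ (Fin 3 → ℝ) (e3 b))).hasFDerivAt.comp x hΦ.hasFDerivAt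

lemma fderiv_jac_apply_comm {Φ : (Fin 3 → ℝ) → (Fin 3 → ℝ)} (hΦ : ContDiff ℝ 2 Φ)
    (x : Fin 3 → ℝ) (a b c : Fin 3) :
    fderiv ℝ (fun y => jac Φ y a b) x (e3 c) = fderiv ℝ (fun y => jac Φ y a c) x (e3 b) := by
  rw [(hasFDerivAt_jac_apply (hΦ.differentiableAt_fderiv x) a b).fderiv,
    (hasFDerivAt_jac_apply (hΦ.differentiableAt_fderiv x) a c).fderiv]
  change fderiv ℝ (fderiv ℝ Φ) x (e3 c) (e3 b) a = fderiv ℝ (fderiv ℝ Φ) x (e3 b) (e3 c) a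
  rw [(hΦ.contDiffAt.isSymmSndFDerivAt (by simp)).eq]

lemma adjugate_fin_three_apply {R : Type*} [CommRing R] (B : Matrix (Fin 3) (Fin 3) R)
    (p q : Fin 3) :
    B.adjugate p q =
      B (q + 1) (p + 1) * B (q + 2) (p + 2) - B (q + 1) (p + 2) * B (q + 2) (p + 1) := by
  rw [eta_fin_three B, adjugate_fin_three]
  fin_cases p <;> fin_cases q <;> simp <;> ring

lemma differentiableAt_adjugate_jac_apply {Φ : (Fin 3 → ℝ) → (Fin 3 → ℝ)} {x : Fin 3 → ℝ}
    (hΦ : DifferentiableAt ℝ (fderiv ℝ Φ) x) (a b : Fin 3) :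
    DifferentiableAt ℝ (fun y => (jac Φ y).adjugate a b) x := by
  have hJ a b := (hasFDerivAt_jac_apply hΦ a b).differentiableAt
  simp_rw [adjugate_fin_three_apply]
  exact ((hJ _ _).mul (hJ _ _)).sub ((hJ _ _).mul (hJ _ _))

lemma sum_fderiv_adjugate_jac_eq_zero {Φ : (Fin 3 → ℝ) → (Fin 3 → ℝ)} (hΦ : ContDiff ℝ 2 Φ)
    (x : Fin 3 → ℝ) (l : Fin 3) :
    ∑ j, fderiv ℝ (fun y => (jac Φ y).adjugate j l) x (e3 j) = 0 := by
  have hJ a b := (hasFDerivAt_jac_apply (hΦ.differentiableAt_fderiv x) a b).differentiableAt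
  simp_rw [adjugate_fin_three_apply]
  simp only [Fin.sum_univ_three, fderiv_mul_sub_mul_apply (hJ _ _) (hJ _ _) (hJ _ _) (hJ _ _),
    Fin.reduceAdd]
  rw [fderiv_jac_apply_comm hΦ x (l + 1) 1 0, fderiv_jac_apply_comm hΦ x (l + 2) 2 0,
    fderiv_jac_apply_comm hΦ x (l + 1) 2 0, fderiv_jac_apply_comm hΦ x (l + 2) 1 0,
    fderiv_jac_apply_comm hΦ x (l + 1) 2 1, fderiv_jac_apply_comm hΦ x (l + 2) 2 1]
  ring

lemma sum_mul_mul_fderiv_adjugate_jac_eq_zero {Φ : (Fin 3 → ℝ) → (Fin 3 → ℝ)}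
    (hΦ : ContDiff ℝ 2 Φ) (x : Fin 3 → ℝ) (c : Fin 3 → ℝ) (N : Matrix (Fin 3) (Fin 3) ℝ) :
    ∑ j, ∑ k, ∑ m, c m * N m k * fderiv ℝ (fun y => (jac Φ y).adjugate j k) x (e3 j) = 0 :=
  calc _ = ∑ k, (∑ m, c m * N m k) * ∑ j, fderiv ℝ (fun y => (jac Φ y).adjugate j k) x (e3 j) := by
        simp only [mul_sum, sum_mul]
        exact sum_comm
    _ = 0 := by simp only [sum_fderiv_adjugate_jac_eq_zero hΦ, mul_zero, sum_const_zero]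

theorem flowed_stress_divergence_general
    (Φ : (Fin 3 → ℝ) → (Fin 3 → ℝ)) (M : (Fin 3 → ℝ) → Matrix (Fin 3) (Fin 3) ℝ)
    (hΦ : ContDiff ℝ (⊤ : ℕ∞) Φ)
    (hM : ∀ i j, ContDiff ℝ (⊤ : ℕ∞) (fun x => M x i j))
    (hdet : ∀ x, (jac Φ x).det = 1)
    (hdiv : ∀ (x : Fin 3 → ℝ) (m : Fin 3),
      ∑ l, fderiv ℝ (fun y => M y m l) x (e3 l) = 0) :
    ∀ (x : Fin 3 → ℝ) (i : Fin 3),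
      ∑ j, fderiv ℝ
          (fun y => ((jac Φ y)⁻¹ * M (Φ y) * ((jac Φ y)⁻¹).transpose) i j) x (e3 j)
        = ∑ j, ∑ l, ∑ m,
            (jac Φ x)⁻¹ j l * M (Φ x) m l *
              fderiv ℝ (fun y => (jac Φ y)⁻¹ i m) x (e3 j) := by
  intro x i
  have hΦ2 : ContDiff ℝ 2 Φ := hΦ.of_le (WithTop.coe_le_coe.2 le_top)
  have hinv y : (jac Φ y)⁻¹ = (jac Φ y).adjugate := by
    rw [Matrix.inv_def, hdet, Ring.inverse_one, one_smul]
  have hJA : jac Φ x * (jac Φ x).adjugate = 1 := by rw [mul_adjugate, hdet, one_smul]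
  have hΦx : DifferentiableAt ℝ Φ x := hΦ2.contDiffAt.differentiableAt two_ne_zero
  have hMΦ m k : DifferentiableAt ℝ (fun z => M z m k) (Φ x) :=
    (hM m k).contDiffAt.differentiableAt (by simp)
  have hrule j := fderiv_mul_mul_transpose_apply (A := fun y => (jac Φ y).adjugate)
    (N := fun y => M (Φ y)) (v := e3 j)
    (differentiableAt_adjugate_jac_apply (hΦ2.differentiableAt_fderiv x))
    (fun m k => (hMΦ m k).comp x hΦx) i j
  simp only [hinv, hrule, sum_add_distrib,
    sum_mul_fderiv_comp_mul_eq_zero hΦx hMΦ (hdiv (Φ x)) hJA,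
    sum_mul_mul_fderiv_adjugate_jac_eq_zero hΦ2, add_zero]
  exact sum_congr rfl fun j _ => sum_congr rfl fun k _ => sum_congr rfl fun m _ => by ring

/-- For a volume-preserving diffeomorphism `Φ` of `𝕋³` with `A = (∇Φ)⁻¹` and a smooth symmetric
divergence-free matrix field `M`, the divergence `Σ_j ∂_j[(A (M∘Φ) Aᵀ)_{ij}]` equals
`Σ_{j,l,m} A_{jl} (M_{ml}∘Φ) ∂_j A_{im}`. -/
theorem flowed_stress_divergence
    (Φ : (Fin 3 → ℝ) → (Fin 3 → ℝ)) (M : (Fin 3 → ℝ) → Matrix (Fin 3) (Fin 3) ℝ)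
    (hΦ : ContDiff ℝ (⊤ : ℕ∞) Φ)
    (hM : ∀ i j, ContDiff ℝ (⊤ : ℕ∞) (fun x => M x i j))
    (hΦbij : Function.Bijective Φ)
    (hΦper : ∀ (x : Fin 3 → ℝ) (j : Fin 3),
      Φ (x + (2 * Real.pi) • e3 j) = Φ x + (2 * Real.pi) • e3 j)
    (hMper : ∀ (x : Fin 3 → ℝ) (j : Fin 3) (i i' : Fin 3),
      M (x + (2 * Real.pi) • e3 j) i i' = M x i i')
    (hdet : ∀ x, (jac Φ x).det = 1)
    (hsym : ∀ x i j, M x i j = M x j i)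
    (hdiv : ∀ (x : Fin 3 → ℝ) (m : Fin 3),
      ∑ l, fderiv ℝ (fun y => M y m l) x (e3 l) = 0) :
    ∀ (x : Fin 3 → ℝ) (i : Fin 3),
      ∑ j, fderiv ℝ
          (fun y => ((jac Φ y)⁻¹ * M (Φ y) * ((jac Φ y)⁻¹).transpose) i j) x (e3 j)
        = ∑ j, ∑ l, ∑ m,
            (jac Φ x)⁻¹ j l * M (Φ x) m l *
              fderiv ℝ (fun y => (jac Φ y)⁻¹ i m) x (e3 j) :=
  flowed_stress_divergence_general Φ M hΦ hM hdet hdiv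
end
end

section
/- Let m ∈ ℕ and let λ₁, λ₂ be real numbers with m ≤ λ₁ < λ₂. Let F : T³ → ℝ be a smooth (T³/m)-periodic function which is constant in the x₃-direction (F(x + t e₃) = F(x) for all t ∈ ℝ). Then for every integer N ≥ 0: (i) ‖D^N P_{[λ₁,λ₂)} F‖_{L∞(T³)} ≤ C(N) (λ₂/m)² λ₂^N ‖F‖_{L¹(T³)}; and (ii) for every integer d ≥ 1, the function ϑ := (λ₁^{−2}Δ)^{−d} P_{[λ₁,λ₂)} F, defined by multiplying the Fourier coefficient of frequency k (with λ₁ ≤ |k| < λ₂) by (λ₁/|k|)^{2d}, satisfies ‖D^N ϑ‖_{L∞(T³)} ≤ C(N,d) (λ₂/m)² λ₁^{min(N,2d)} λ₂^{max(N−2d,0)} ‖F‖_{L¹(T³)}. The constants are independent of m, λ₁, λ₂ and F. -/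
/-!
Translating the integral that defines `F̂(k)` by a period `v` of `F` multiplies it by
`e^{-ik·v}`, so `F̂(k) = 0` unless `e^{ik·v} = 1` for every period. Periods `2π/m · eⱼ` and
`t · e₃` therefore leave only frequencies in `mℤ × mℤ × {0}`, of which at most `9 (λ₂/m)²` lie
in the ball of radius `λ₂`. Each surviving mode has `|F̂(k)| ≤ ‖F‖_{L¹}`, and `N` derivatives of
`e^{ik·x}` cost `(3|k|)^N` in the sup norm; for `ϑ` the multiplier `(λ₁/|k|)^{2d}` absorbs up to
`2d` of these powers of `|k|`, replacing them by powers of `λ₁`.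
-/

open MeasureTheory

noncomputable section

/-- The fundamental domain `[-π,π]³` of the torus `𝕋³`. -/
def T3 : Set (Fin 3 → ℝ) := {x | ∀ i, x i ∈ Set.Icc (-Real.pi) Real.pi}

/-- The Euclidean norm of a frequency `k ∈ ℤ³`. -/
def knorm (k : Fin 3 → ℤ) : ℝ := Real.sqrt (∑ i, ((k i : ℝ))^2)

/-- The `k`-th Fourier coefficient of a function on `𝕋³`. -/
def fourierCoeff3 (F : (Fin 3 → ℝ) → ℝ) (k : Fin 3 → ℤ) : ℂ :=
  (((2 * Real.pi)⁻¹ : ℝ) ^ (3:ℕ)) •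
    ∫ x in T3, (F x : ℂ) * Complex.exp (-Complex.I * ∑ i, (k i : ℂ) * (x i : ℂ))

/-- The Fourier projection onto frequencies `λ₁ ≤ |k| < λ₂`, with each Fourier coefficient
multiplied by the weight `w k` (take `w = 1` for the plain projection `P_{[λ₁,λ₂)}`). -/
def fourierProj (w : (Fin 3 → ℤ) → ℝ) (l₁ l₂ : ℝ) (F : (Fin 3 → ℝ) → ℝ)
    (x : Fin 3 → ℝ) : ℂ :=
  ∑' k : Fin 3 → ℤ,
    if l₁ ≤ knorm k ∧ knorm k < l₂ then
      (w k : ℂ) * fourierCoeff3 F k * Complex.exp (Complex.I * ∑ i, (k i : ℂ) * (x i : ℂ))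
    else 0

open Function Complex Set Pointwise
open scoped Real Finset

theorem Function.Periodic.of_mem_span_int {M β : Type*} [AddCommGroup M] {f : M → β} {S : Set M}
    (hS : ∀ c ∈ S, Periodic f c) {c : M} (hc : c ∈ Submodule.span ℤ S) : Periodic f c := by
  induction hc using Submodule.span_induction with
  | mem c hc => exact hS c hc
  | zero => exact periodic_with_period_zero f
  | add _ _ _ _ h₁ h₂ => exact h₁.add_period h₂
  | smul n _ _ h => exact h.zsmul n

theorem Function.Periodic.smul_of_div_natCast_smul {M β : Type*} [AddCommGroup M] [Module ℝ M]
    {f : M → β} {c : ℝ} {v : M} {n : ℕ} (hn : n ≠ 0) (h : Periodic f ((c / n) • v)) :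
    Periodic f (c • v) := by
  have hn' : (n : ℝ) ≠ 0 := Nat.cast_ne_zero.2 hn
  simpa only [← Nat.cast_smul_eq_nsmul ℝ, smul_smul, mul_div_cancel₀ _ hn'] using h.nsmul n

theorem MeasureTheory.IsAddFundamentalDomain.setIntegral_add_right_eq {α E : Type*}
    [AddCommGroup α] [MeasurableSpace α] [MeasurableAdd α] {μ : Measure α} [μ.IsAddLeftInvariant]
    [NormedAddCommGroup E] [NormedSpace ℝ E] {L : AddSubgroup α} [Countable L] {s : Set α}
    (hs : IsAddFundamentalDomain L s μ) {g : α → E} (hg : ∀ c ∈ L, Periodic g c) (v : α) :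
    ∫ x in s, g (x + v) ∂μ = ∫ x in s, g x ∂μ := by
  calc ∫ x in s, g (x + v) ∂μ = ∫ x in v +ᵥ s, g x ∂μ := by
        simp_rw [add_comm _ v]
        exact ((measurePreserving_add_left μ v).setIntegral_image_emb
          (measurableEmbedding_addLeft v) g s).symm
    _ = ∫ x in s, g x ∂μ :=
        (hs.vadd_of_comm v).setIntegral_eq hs fun c x => by
          rw [AddSubgroup.vadd_def, vadd_eq_add, add_comm]; exact hg c c.2 x

theorem div_pow_mul_pow_le {a q b : ℝ} (ha : 0 < a) (haq : a ≤ q) (hqb : q ≤ b) (n N : ℕ) :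
    (a / q) ^ n * q ^ N ≤ a ^ min N n * b ^ (N - n) := by
  have hq : 0 < q := ha.trans_le haq
  rcases le_total N n with hNn | hnN
  · rw [min_eq_left hNn, Nat.sub_eq_zero_of_le hNn, pow_zero, mul_one]
    calc (a / q) ^ n * q ^ N ≤ (a / q) ^ N * q ^ N := by
          refine mul_le_mul_of_nonneg_right ?_ (by positivity)
          exact pow_le_pow_of_le_one (by positivity) (div_le_one_of_le₀ haq hq.le) hNn
      _ = a ^ N := by rw [← mul_pow, div_mul_cancel₀ _ hq.ne']
  · rw [min_eq_right hnN]
    calc (a / q) ^ n * q ^ N = a ^ n * q ^ (N - n) := by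
          rw [div_pow, ← Nat.add_sub_cancel' hnN, pow_add, Nat.add_sub_cancel_left]
          field_simp
      _ ≤ a ^ n * b ^ (N - n) := by gcongr

theorem contDiff_cexp_ofReal_mul_I {n : WithTop ℕ∞} : ContDiff ℝ n fun t : ℝ => cexp (t * I) :=
  contDiff_exp.comp (ofRealCLM.contDiff.mul contDiff_const)

theorem iteratedDeriv_cexp_ofReal_mul_I (n : ℕ) :
    iteratedDeriv n (fun t : ℝ => cexp (t * I)) = fun t : ℝ => I ^ n * cexp (t * I) := by
  induction n with
  | zero => simp
  | succ n ih =>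
    ext t
    have hexp : HasDerivAt (fun t : ℝ => cexp (t * I)) (cexp (t * I) * I) t := by
      simpa using ((hasDerivAt_id t).ofReal_comp.mul_const I).cexp
    rw [iteratedDeriv_succ, ih, (hexp.const_mul _).deriv]
    ring

theorem norm_iteratedFDeriv_cexp_clm_mul_I_le {E : Type*} [NormedAddCommGroup E]
    [NormedSpace ℝ E] (L : E →L[ℝ] ℝ) (n : ℕ) (x : E) :
    ‖iteratedFDeriv ℝ n (fun x => cexp (L x * I)) x‖ ≤ ‖L‖ ^ n := by
  have hone (t : ℝ) : ‖iteratedFDeriv ℝ n (fun t : ℝ => cexp (t * I)) t‖ = 1 := by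
    rw [norm_iteratedFDeriv_eq_norm_iteratedDeriv, iteratedDeriv_cexp_ofReal_mul_I]
    simp [norm_exp_ofReal_mul_I]
  rw [show (fun x => cexp (L x * I)) = (fun t : ℝ => cexp (t * I)) ∘ L from rfl,
    L.iteratedFDeriv_comp_right contDiff_cexp_ofReal_mul_I x le_rfl]
  refine (ContinuousMultilinearMap.norm_compContinuousLinearMap_le _ _).trans ?_
  simp [hone]

section Torus

variable {ι : Type*} [Fintype ι]

def torusBasis : Module.Basis ι ℝ (ι → ℝ) :=
  (Pi.basisFun ℝ ι).unitsSMul fun _ => Units.mk0 (2 * π) Real.two_pi_pos.ne'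

theorem torusBasis_apply [DecidableEq ι] (i : ι) : torusBasis i = (2 * π) • Pi.single i 1 := by
  simp [torusBasis, Module.Basis.unitsSMul_apply, Units.smul_def]

theorem mem_fundamentalDomain_torusBasis {x : ι → ℝ} :
    x ∈ ZSpan.fundamentalDomain torusBasis ↔ ∀ i, x i ∈ Ico 0 (2 * π) := by
  have hrepr (i : ι) : torusBasis.repr x i = x i / (2 * π) := by
    simp [torusBasis, Module.Basis.repr_unitsSMul, Units.smul_def]
    ring
  simp_rw [ZSpan.mem_fundamentalDomain, hrepr, mem_Ico, le_div_iff₀ Real.two_pi_pos,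
    div_lt_one Real.two_pi_pos, zero_mul]

theorem isAddFundamentalDomain_pi_Ico :
    IsAddFundamentalDomain (Submodule.span ℤ (range (torusBasis (ι := ι)))).toAddSubgroup
      (pi univ fun _ : ι => Ico (-π) π) volume := by
  have hD : (pi univ fun _ : ι => Ico (-π) π) =
      (fun _ : ι => -π) +ᵥ ZSpan.fundamentalDomain (torusBasis (ι := ι)) := by
    ext x
    simp only [mem_vadd_set_iff_neg_vadd_mem, mem_fundamentalDomain_torusBasis, mem_pi, mem_univ,
      true_implies, mem_Ico, vadd_eq_add, Pi.add_apply, Pi.neg_apply, neg_neg]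
    refine forall_congr' fun i => ?_
    constructor <;> rintro ⟨h₁, h₂⟩ <;> constructor <;> linarith
  rw [hD]
  exact (ZSpan.isAddFundamentalDomain' (torusBasis (ι := ι)) volume).vadd_of_comm _

theorem setIntegral_pi_Icc_add_right [DecidableEq ι] {E : Type*} [NormedAddCommGroup E]
    [NormedSpace ℝ E] {g : (ι → ℝ) → E} (hg : ∀ i, Periodic g ((2 * π) • Pi.single i 1))
    (v : ι → ℝ) :
    ∫ x in pi univ (fun _ => Icc (-π) π), g (x + v) =
      ∫ x in pi univ (fun _ => Icc (-π) π), g x := by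
  have hae : (pi univ fun _ : ι => Ico (-π) π) =ᵐ[volume] pi univ fun _ => Icc (-π) π :=
    Measure.pi_Ico_ae_eq_pi_Icc
  have : Countable (Submodule.span ℤ (range (torusBasis (ι := ι)))).toAddSubgroup :=
    inferInstanceAs (Countable (Submodule.span ℤ (range (torusBasis (ι := ι)))))
  rw [← setIntegral_congr_set hae, ← setIntegral_congr_set hae]
  refine isAddFundamentalDomain_pi_Ico.setIntegral_add_right_eq (fun c hc => ?_) v
  refine Periodic.of_mem_span_int ?_ hc
  rintro _ ⟨i, rfl⟩
  rw [torusBasis_apply]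
  exact hg i

def torusChar (k : ι → ℤ) (x : ι → ℝ) : ℂ := cexp (I * ∑ i, (k i : ℂ) * (x i : ℂ))

def torusForm (k : ι → ℤ) : (ι → ℝ) →L[ℝ] ℝ := ∑ i, (k i : ℝ) • ContinuousLinearMap.proj i

theorem torusForm_apply (k : ι → ℤ) (x : ι → ℝ) : torusForm k x = ∑ i, (k i : ℝ) * x i := by
  simp [torusForm]

theorem norm_torusForm_le (k : ι → ℤ) : ‖torusForm k‖ ≤ ∑ i, |(k i : ℝ)| := by
  refine ContinuousLinearMap.opNorm_le_bound _ (by positivity) fun x => ?_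
  rw [torusForm_apply, Finset.sum_mul]
  refine (Finset.abs_sum_le_sum_abs _ _).trans (Finset.sum_le_sum fun i _ => ?_)
  rw [abs_mul]
  gcongr
  exact norm_le_pi_norm x i

theorem torusChar_eq (k : ι → ℤ) (x : ι → ℝ) : torusChar k x = cexp (torusForm k x * I) := by
  simp only [torusChar, torusForm_apply, ofReal_sum, ofReal_mul, ofReal_intCast, mul_comm I]

theorem torusChar_add (k : ι → ℤ) (x y : ι → ℝ) :
    torusChar k (x + y) = torusChar k x * torusChar k y := by
  simp only [torusChar_eq, map_add, ofReal_add, add_mul, Complex.exp_add]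

theorem torusChar_smul_single [DecidableEq ι] (k : ι → ℤ) (t : ℝ) (j : ι) :
    torusChar k (t • Pi.single j 1) = cexp ((k j * t : ℝ) * I) := by
  simp [torusChar_eq, torusForm_apply, Pi.single_apply, mul_comm]

theorem torusChar_two_pi_smul_single [DecidableEq ι] (k : ι → ℤ) (j : ι) :
    torusChar k ((2 * π) • Pi.single j 1) = 1 := by
  rw [torusChar_smul_single, Complex.exp_eq_one_iff]
  exact ⟨k j, by push_cast; ring⟩

theorem norm_torusChar (k : ι → ℤ) (x : ι → ℝ) : ‖torusChar k x‖ = 1 := by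
  rw [torusChar_eq, norm_exp_ofReal_mul_I]

theorem contDiff_torusChar (k : ι → ℤ) {n : WithTop ℕ∞} : ContDiff ℝ n (torusChar k) := by
  simp only [funext (torusChar_eq k)]
  exact contDiff_cexp_ofReal_mul_I.comp (torusForm k).contDiff

theorem norm_iteratedFDeriv_torusChar_le (k : ι → ℤ) (n : ℕ)
    (x : ι → ℝ) : ‖iteratedFDeriv ℝ n (torusChar k) x‖ ≤ (∑ i, |(k i : ℝ)|) ^ n := by
  rw [funext (torusChar_eq k)]
  exact (norm_iteratedFDeriv_cexp_clm_mul_I_le _ n x).trans (by gcongr; exact norm_torusForm_le k)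

theorem norm_iteratedFDeriv_sum_torusChar_le (s : Finset (ι → ℤ))
    (c : (ι → ℤ) → ℂ) (n : ℕ) (x : ι → ℝ) :
    ‖iteratedFDeriv ℝ n (fun x => ∑ k ∈ s, c k * torusChar k x) x‖ ≤
      ∑ k ∈ s, ‖c k‖ * (∑ i, |(k i : ℝ)|) ^ n := by
  rw [iteratedFDeriv_sum fun k _ => contDiff_const.mul (contDiff_torusChar k), Finset.sum_apply]
  refine (norm_sum_le _ _).trans (Finset.sum_le_sum fun k _ => ?_)
  simp only [← smul_eq_mul (a := c k)]
  rw [iteratedFDeriv_const_smul_apply' (contDiff_torusChar k).contDiffAt]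
  exact (ContinuousMultilinearMap.opNorm_smul_le _ _).trans
    (by gcongr; exact norm_iteratedFDeriv_torusChar_le k n x)

end Torus

theorem T3_eq_pi : T3 = pi univ fun _ => Icc (-π) π := by
  ext
  simp only [T3, mem_ofPred_eq, mem_pi, mem_univ, true_implies]

theorem setIntegral_T3_add_right {g : (Fin 3 → ℝ) → ℂ} (hg : ∀ j, Periodic g ((2 * π) • e3 j))
    (v : Fin 3 → ℝ) : ∫ x in T3, g (x + v) = ∫ x in T3, g x := by
  rw [T3_eq_pi]
  exact setIntegral_pi_Icc_add_right hg v

theorem fourierCoeff3_eq (F : (Fin 3 → ℝ) → ℝ) (k : Fin 3 → ℤ) :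
    fourierCoeff3 F k = ((2 * π)⁻¹ ^ 3 : ℝ) • ∫ x in T3, (F x : ℂ) * (torusChar k x)⁻¹ := by
  simp only [fourierCoeff3, torusChar, neg_mul, Complex.exp_neg]

theorem norm_fourierCoeff3_le (F : (Fin 3 → ℝ) → ℝ) (k : Fin 3 → ℤ) :
    ‖fourierCoeff3 F k‖ ≤ ∫ y in T3, |F y| := by
  have hpi : (2 * π)⁻¹ ^ 3 ≤ 1 :=
    pow_le_one₀ (by positivity) (inv_le_one_of_one_le₀ (by linarith [Real.pi_gt_three]))
  rw [fourierCoeff3_eq, norm_smul, Real.norm_of_nonneg (by positivity)]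
  refine (mul_le_of_le_one_left (norm_nonneg _) hpi).trans
    ((norm_integral_le_integral_norm _).trans_eq ?_)
  simp [norm_torusChar]

theorem fourierCoeff3_eq_zero_of_periodic {F : (Fin 3 → ℝ) → ℝ} {k : Fin 3 → ℤ} {v : Fin 3 → ℝ}
    (hF : ∀ j, Periodic F ((2 * π) • e3 j)) (hv : Periodic F v) (hkv : torusChar k v ≠ 1) :
    fourierCoeff3 F k = 0 := by
  rw [fourierCoeff3_eq]
  set G : (Fin 3 → ℝ) → ℂ := fun x => (F x : ℂ) * (torusChar k x)⁻¹
  have hG (j : Fin 3) : Periodic G ((2 * π) • e3 j) := fun x => by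
    simp only [G, hF j x]
    rw [torusChar_add, e3, torusChar_two_pi_smul_single, mul_one]
  have hGv (x : Fin 3 → ℝ) : G (x + v) = G x * (torusChar k v)⁻¹ := by
    simp only [G, hv x, torusChar_add, mul_inv, mul_assoc]
  have hG0 : ∫ x in T3, G x = 0 := by
    by_contra h0
    refine hkv (inv_eq_one.1 ((mul_eq_left₀ h0).1 ?_))
    simpa only [hGv, integral_mul_const] using setIntegral_T3_add_right hG v
  rw [hG0, smul_zero]

theorem dvd_of_fourierCoeff3_ne_zero {F : (Fin 3 → ℝ) → ℝ} {k : Fin 3 → ℤ} {m : ℕ} (hm : m ≠ 0)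
    (hF : ∀ j, Periodic F ((2 * π / m) • e3 j)) (hk : fourierCoeff3 F k ≠ 0) (j : Fin 3) :
    (m : ℤ) ∣ k j := by
  by_contra hdvd
  refine hk (fourierCoeff3_eq_zero_of_periodic (fun i => (hF i).smul_of_div_natCast_smul hm)
    (hF j) ?_)
  rw [e3, torusChar_smul_single, Ne, Complex.exp_eq_one_iff]
  rintro ⟨n, hn⟩
  have hre : (k j : ℝ) * (2 * π / m) = n * (2 * π) := by
    simpa using congrArg Complex.im hn
  refine hdvd ⟨n, ?_⟩
  have hm' : (m : ℝ) ≠ 0 := Nat.cast_ne_zero.2 hm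
  field_simp at hre
  exact_mod_cast hre

theorem apply_two_eq_zero_of_fourierCoeff3_ne_zero {F : (Fin 3 → ℝ) → ℝ} {k : Fin 3 → ℤ}
    (hF : ∀ j, Periodic F ((2 * π) • e3 j)) (hconst : ∀ t : ℝ, Periodic F (t • e3 2))
    (hk : fourierCoeff3 F k ≠ 0) : k 2 = 0 := by
  by_contra h2
  refine hk (fourierCoeff3_eq_zero_of_periodic hF (hconst (π / k 2)) ?_)
  rw [e3, torusChar_smul_single, mul_div_cancel₀ _ (Int.cast_ne_zero.2 h2), exp_pi_mul_I]
  norm_num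

theorem abs_le_knorm (k : Fin 3 → ℤ) (i : Fin 3) : |(k i : ℝ)| ≤ knorm k := by
  rw [knorm, ← Real.sqrt_sq_eq_abs]
  exact Real.sqrt_le_sqrt (Finset.single_le_sum (f := fun i => (k i : ℝ) ^ 2)
    (fun i _ => sq_nonneg _) (Finset.mem_univ i))

theorem sum_abs_le_three_mul_knorm (k : Fin 3 → ℤ) : ∑ i, |(k i : ℝ)| ≤ 3 * knorm k := by
  simpa using Finset.sum_le_sum fun i (_ : i ∈ Finset.univ) => abs_le_knorm k i

def pipeFrequencies (m : ℕ) (R : ℝ) : Finset (Fin 3 → ℤ) :=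
  (Finset.Icc (-⌊R / m⌋) ⌊R / m⌋ ×ˢ Finset.Icc (-⌊R / m⌋) ⌊R / m⌋).image
    fun p => ![m * p.1, m * p.2, 0]

theorem mem_pipeFrequencies {m : ℕ} (hm : m ≠ 0) {R : ℝ} {k : Fin 3 → ℤ} (h₀ : (m : ℤ) ∣ k 0)
    (h₁ : (m : ℤ) ∣ k 1) (h₂ : k 2 = 0) (hk : knorm k < R) : k ∈ pipeFrequencies m R := by
  have hm0 : (0 : ℝ) < m := by positivity
  have hIcc {a : ℤ} {i : Fin 3} (hi : k i = m * a) : a ∈ Finset.Icc (-⌊R / m⌋) ⌊R / m⌋ := by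
    have hka : (m : ℝ) * |(a : ℝ)| ≤ R := by
      have := abs_le_knorm k i
      rw [hi, Int.cast_mul, Int.cast_natCast, abs_mul, abs_of_pos hm0] at this
      linarith
    have ha : |(a : ℝ)| ≤ R / m := by rwa [le_div_iff₀ hm0, mul_comm]
    rw [Finset.mem_Icc, neg_le, Int.le_floor, Int.le_floor, Int.cast_neg]
    exact ⟨(neg_le_abs _).trans ha, (le_abs_self _).trans ha⟩
  obtain ⟨a, ha⟩ := h₀
  obtain ⟨b, hb⟩ := h₁
  refine Finset.mem_image.2 ⟨(a, b), Finset.mem_product.2 ⟨hIcc ha, hIcc hb⟩, ?_⟩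
  ext i
  fin_cases i <;> simp [ha, hb, h₂]

theorem card_pipeFrequencies_le {m : ℕ} (hm : m ≠ 0) {R : ℝ} (hR : m ≤ R) :
    (#(pipeFrequencies m R) : ℝ) ≤ 9 * (R / m) ^ 2 := by
  set B := ⌊R / m⌋
  have hRm : 1 ≤ R / m := (one_le_div (by positivity)).2 hR
  have hB : (0 : ℤ) ≤ 2 * B + 1 := by have := Int.floor_nonneg.2 (zero_le_one.trans hRm); omega
  have hIcc : (#(Finset.Icc (-B) B) : ℝ) ≤ 3 * (R / m) := by
    rw [Int.card_Icc, show B + 1 - -B = 2 * B + 1 by ring, ← Int.cast_natCast,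
      Int.toNat_of_nonneg hB]
    push_cast
    linarith [Int.floor_le (R / m)]
  calc (#(pipeFrequencies m R) : ℝ) ≤ #(Finset.Icc (-B) B ×ˢ Finset.Icc (-B) B) := by
        exact_mod_cast Finset.card_image_le
    _ ≤ (3 * (R / m)) * (3 * (R / m)) := by
        rw [Finset.card_product, Nat.cast_mul]
        gcongr
    _ = 9 * (R / m) ^ 2 := by ring

theorem fourierProj_eq_sum {w : (Fin 3 → ℤ) → ℝ} {l₁ l₂ : ℝ} {F : (Fin 3 → ℝ) → ℝ}
    {s : Finset (Fin 3 → ℤ)} (hs : ∀ k, knorm k < l₂ → fourierCoeff3 F k ≠ 0 → k ∈ s) :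
    fourierProj w l₁ l₂ F = fun x => ∑ k ∈ s,
      (if l₁ ≤ knorm k ∧ knorm k < l₂ then (w k : ℂ) * fourierCoeff3 F k else 0) *
        torusChar k x := by
  ext x
  rw [fourierProj, tsum_eq_sum fun k hk => ?_]
  · exact Finset.sum_congr rfl fun k _ => by rw [ite_mul, zero_mul, torusChar]
  · split_ifs with hact
    · rw [not_not.1 (mt (hs k hact.2) hk), mul_zero, zero_mul]
    · rfl

theorem norm_iteratedFDeriv_fourierProj_le {w : (Fin 3 → ℤ) → ℝ} {l₁ l₂ : ℝ}
    {F : (Fin 3 → ℝ) → ℝ} {s : Finset (Fin 3 → ℤ)}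
    (hs : ∀ k, knorm k < l₂ → fourierCoeff3 F k ≠ 0 → k ∈ s) {N : ℕ} {W : ℝ} (hW₀ : 0 ≤ W)
    (hW : ∀ k, l₁ ≤ knorm k → knorm k < l₂ → |w k| * knorm k ^ N ≤ W) (x : Fin 3 → ℝ) :
    ‖iteratedFDeriv ℝ N (fourierProj w l₁ l₂ F) x‖ ≤ #s * (3 ^ N * W * ∫ y in T3, |F y|) := by
  rw [fourierProj_eq_sum hs, ← nsmul_eq_mul]
  refine (norm_iteratedFDeriv_sum_torusChar_le _ _ N x).trans
    (Finset.sum_le_card_nsmul _ _ _ fun k _ => ?_)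
  split_ifs with hact
  · calc ‖(w k : ℂ) * fourierCoeff3 F k‖ * (∑ i, |(k i : ℝ)|) ^ N
        ≤ ‖fourierCoeff3 F k‖ * (|w k| * (3 * knorm k) ^ N) := by
          rw [norm_mul, norm_real, Real.norm_eq_abs, mul_comm |w k|, mul_assoc]
          gcongr
          exact sum_abs_le_three_mul_knorm k
      _ = 3 ^ N * (|w k| * knorm k ^ N) * ‖fourierCoeff3 F k‖ := by ring
      _ ≤ 3 ^ N * W * ∫ y in T3, |F y| := by
          gcongr
          exacts [hW k hact.1 hact.2, norm_fourierCoeff3_le F k]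
  · rw [norm_zero, zero_mul]
    positivity

theorem norm_iteratedFDeriv_fourierProj_le_of_pipe {w : (Fin 3 → ℤ) → ℝ} {l₁ l₂ : ℝ}
    {F : (Fin 3 → ℝ) → ℝ} {m : ℕ} (hm : m ≠ 0) (hml₂ : (m : ℝ) ≤ l₂)
    (hper : ∀ j, Periodic F ((2 * π / m) • e3 j)) (hconst : ∀ t : ℝ, Periodic F (t • e3 2))
    {N : ℕ} {W : ℝ} (hW₀ : 0 ≤ W)
    (hW : ∀ k, l₁ ≤ knorm k → knorm k < l₂ → |w k| * knorm k ^ N ≤ W) (x : Fin 3 → ℝ) :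
    ‖iteratedFDeriv ℝ N (fourierProj w l₁ l₂ F) x‖ ≤
      9 * 3 ^ N * (l₂ / m) ^ 2 * W * ∫ y in T3, |F y| := by
  have hs (k : Fin 3 → ℤ) (hk : knorm k < l₂) (hFk : fourierCoeff3 F k ≠ 0) :
      k ∈ pipeFrequencies m l₂ :=
    mem_pipeFrequencies hm (dvd_of_fourierCoeff3_ne_zero hm hper hFk 0)
      (dvd_of_fourierCoeff3_ne_zero hm hper hFk 1)
      (apply_two_eq_zero_of_fourierCoeff3_ne_zero (fun j => (hper j).smul_of_div_natCast_smul hm)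
        hconst hFk) hk
  have hint : 0 ≤ ∫ y in T3, |F y| := integral_nonneg fun _ => abs_nonneg _
  calc ‖iteratedFDeriv ℝ N (fourierProj w l₁ l₂ F) x‖
      ≤ #(pipeFrequencies m l₂) * (3 ^ N * W * ∫ y in T3, |F y|) :=
        norm_iteratedFDeriv_fourierProj_le hs hW₀ hW x
    _ ≤ 9 * (l₂ / m) ^ 2 * (3 ^ N * W * ∫ y in T3, |F y|) := by
        gcongr
        exact card_pipeFrequencies_le hm hml₂
    _ = 9 * 3 ^ N * (l₂ / m) ^ 2 * W * ∫ y in T3, |F y| := by ring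

theorem projected_pipe_density_bounds_general (N d : ℕ) :
    ∃ C : ℝ, ∀ (m : ℕ), 0 < m → ∀ (l₁ l₂ : ℝ), (m : ℝ) ≤ l₁ → l₁ < l₂ →
      ∀ F : (Fin 3 → ℝ) → ℝ, ContDiff ℝ (⊤ : ℕ∞) F →
      (∀ (x : Fin 3 → ℝ) (j : Fin 3), F (x + (2 * Real.pi / m) • e3 j) = F x) →
      (∀ (x : Fin 3 → ℝ) (t : ℝ), F (x + t • e3 2) = F x) →
      (∀ x, ‖iteratedFDeriv ℝ N (fourierProj (fun _ => 1) l₁ l₂ F) x‖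
          ≤ C * (l₂ / m)^2 * l₂ ^ N * ∫ y in T3, |F y|) ∧
      (∀ x, ‖iteratedFDeriv ℝ N
            (fourierProj (fun k => (l₁ / knorm k)^(2*d)) l₁ l₂ F) x‖
          ≤ C * (l₂ / m)^2 * l₁ ^ (min N (2*d)) * l₂ ^ (N - 2*d) * ∫ y in T3, |F y|) := by
  refine ⟨9 * 3 ^ N, fun m hm l₁ l₂ hml₁ hl₁₂ F _ hper hconst => ?_⟩
  have hl₁ : 0 < l₁ := (Nat.cast_pos.2 hm).trans_le hml₁
  have hl₂ : 0 < l₂ := hl₁.trans hl₁₂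
  have bound (w : (Fin 3 → ℤ) → ℝ) (W : ℝ) :=
    norm_iteratedFDeriv_fourierProj_le_of_pipe (w := w) (l₁ := l₁) (N := N) (W := W) hm.ne'
      (hml₁.trans hl₁₂.le) (fun j x => hper x j) (fun t x => hconst x t)
  refine ⟨fun x => bound _ (l₂ ^ N) (by positivity) (fun k _ hk => ?_) x, fun x =>
    (bound _ (l₁ ^ min N (2 * d) * l₂ ^ (N - 2 * d)) (by positivity) (fun k hk₁ hk₂ => ?_)
      x).trans_eq (by ring)⟩
  · rw [abs_one, one_mul]
    exact pow_le_pow_left₀ (Real.sqrt_nonneg _) hk.le N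
  · rw [abs_of_nonneg (by have := hl₁.trans_le hk₁; positivity)]
    exact div_pow_mul_pow_le hl₁ hk₁ hk₂.le (2 * d) N

/-- **Sharp `L^∞` bounds for frequency-localized squared pipe densities.** For a smooth
`(𝕋³/m)`-periodic function `F`, constant in the `x₃` direction, and `m ≤ λ₁ < λ₂`:
`‖D^N P_{[λ₁,λ₂)}F‖_∞ ≲ (λ₂/m)² λ₂^N ‖F‖_{L¹}` and, with `ϑ = (λ₁^{-2}Δ)^{-d}P_{[λ₁,λ₂)}F`,
`‖D^N ϑ‖_∞ ≲ (λ₂/m)² λ₁^{min(N,2d)} λ₂^{max(N-2d,0)} ‖F‖_{L¹}`, with constants independent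
of `m, λ₁, λ₂, F`. -/
theorem projected_pipe_density_bounds (N d : ℕ) (hd : 1 ≤ d) :
    ∃ C : ℝ, ∀ (m : ℕ), 0 < m → ∀ (l₁ l₂ : ℝ), (m : ℝ) ≤ l₁ → l₁ < l₂ →
      ∀ F : (Fin 3 → ℝ) → ℝ, ContDiff ℝ (⊤ : ℕ∞) F →
      (∀ (x : Fin 3 → ℝ) (j : Fin 3), F (x + (2 * Real.pi / m) • e3 j) = F x) →
      (∀ (x : Fin 3 → ℝ) (t : ℝ), F (x + t • e3 2) = F x) →
      (∀ x, ‖iteratedFDeriv ℝ N (fourierProj (fun _ => 1) l₁ l₂ F) x‖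
          ≤ C * (l₂ / m)^2 * l₂ ^ N * ∫ y in T3, |F y|) ∧
      (∀ x, ‖iteratedFDeriv ℝ N
            (fourierProj (fun k => (l₁ / knorm k)^(2*d)) l₁ l₂ F) x‖
          ≤ C * (l₂ / m)^2 * l₁ ^ (min N (2*d)) * l₂ ^ (N - 2*d) * ∫ y in T3, |F y|) :=
  projected_pipe_density_bounds_general N d
end
end

section
/- Let N ≥ 1 be an integer and A ≥ 8 a real number. There exist smooth functions ψ̃, ψ : [0,∞) → [0,1] such that: (1) 1_{[0, A/4]} ≤ ψ̃ ≤ 1_{[0, A]}; (2) 1_{[1, A/4]} ≤ ψ ≤ 1_{[1/4, A]}; (3) for all y ≥ 0, ψ̃(y)² + Σ_{i ≥ 1} ψ(A^{−i} y)² = 1; (4) supp ψ̃ ∩ supp ψ(A^{−i} ·) = ∅ for every i ≥ 2, and supp ψ(A^{−i} ·) ∩ supp ψ(A^{−i′} ·) = ∅ whenever |i − i′| ≥ 2; (5) for every 0 ≤ n ≤ N there are constants C_n, independent of A, such that |ψ̃⁽ⁿ⁾(y)| ≤ C_n ψ̃(y)^{1 − n/N} A^{−n} for 0 ≤ y < A,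 |ψ⁽ⁿ⁾(y)| ≤ C_n ψ(y)^{1 − n/N} for 1/4 < y < 1, and |ψ⁽ⁿ⁾(y)| ≤ C_n A^{−n} ψ(y)^{1 − n/N} for A/4 < y < A. -/
/-!
Both cutoffs are built from one profile `fall`, equal to `1` left of `0` and to `0` right of `1`,
with `fall x ^ 2 + fall (1 - x) ^ 2 = 1`: `ψ̃` is `fall` rescaled to `[A/4, A]` and `ψ` is the
product of the rising profile on `[1/4, 1]` with `ψ̃`. Since `1 ≤ A/4` one has
`ψ(z)² = ψ̃(z)² - ψ̃(A z)²`, so the series telescopes. The derivative bounds reduce, by the chain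
rule for affine maps, to `|fall⁽ⁿ⁾| ≲ fall ^ e` for `e < 1`. Writing
`fall = expNegInvGlue (1 - ·) / glueNorm` with `glueNorm` smooth and positive, Leibniz reduces
this to `|g⁽ⁱ⁾| ≲ g ^ e` for `g(t) = exp (-1/t)`, which holds because `g⁽ⁱ⁾` is a polynomial
in `1/t` times `g`, and the polynomial is absorbed by `g ^ (1 - e)`.
-/

open Polynomial Real Set Filter Topology
open scoped ContDiff Nat

theorem Polynomial.abs_eval_le_mul_exp (p : ℝ[X]) {δ : ℝ} (hδ : 0 < δ) :
    ∃ K, ∀ u, 0 ≤ u → |p.eval u| ≤ K * exp (δ * u) := by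
  refine ⟨∑ k ∈ Finset.range (p.natDegree + 1), |p.coeff k| * (k ! / δ ^ k), fun u hu => ?_⟩
  rw [eval_eq_sum_range, Finset.sum_mul]
  refine (Finset.abs_sum_le_sum_abs _ _).trans (Finset.sum_le_sum fun k _ => ?_)
  rw [abs_mul, abs_pow, abs_of_nonneg hu, mul_assoc]
  gcongr
  have hexp : (δ * u) ^ k / k ! ≤ exp (δ * u) :=
    Real.pow_div_factorial_le_exp _ (by positivity) k
  calc u ^ k = (δ * u) ^ k / k ! * (k ! / δ ^ k) := by field_simp; ring
    _ ≤ exp (δ * u) * (k ! / δ ^ k) := by gcongr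
    _ = k ! / δ ^ k * exp (δ * u) := mul_comm _ _

namespace expNegInvGlue

theorem le_one (x : ℝ) : expNegInvGlue x ≤ 1 := by
  rcases le_or_gt x 0 with hx | hx
  · simp [zero_of_nonpos hx]
  · rw [expNegInvGlue, if_neg hx.not_ge, exp_le_one_iff, neg_nonpos]
    positivity

theorem exists_iteratedDeriv_eq (n : ℕ) :
    ∃ p : ℝ[X], iteratedDeriv n expNegInvGlue = fun x => p.eval x⁻¹ * expNegInvGlue x := by
  induction n with
  | zero => exact ⟨1, by funext x; simp⟩
  | succ n ih =>
    obtain ⟨p, hp⟩ := ih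
    refine ⟨X ^ 2 * (p - derivative p), ?_⟩
    rw [iteratedDeriv_succ, hp]
    funext x
    exact (hasDerivAt_polynomial_eval_inv_mul p x).deriv

theorem exists_abs_iteratedDeriv_le_rpow (n : ℕ) {β : ℝ} (hβ : β < 1) :
    ∃ K, 0 ≤ K ∧ ∀ x, |iteratedDeriv n expNegInvGlue x| ≤ K * expNegInvGlue x ^ β := by
  obtain ⟨p, hp⟩ := exists_iteratedDeriv_eq n
  obtain ⟨K, hK⟩ := p.abs_eval_le_mul_exp (sub_pos.2 hβ)
  have hK0 : 0 ≤ K := by simpa using (abs_nonneg _).trans (hK 0 le_rfl)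
  refine ⟨K, hK0, fun x => ?_⟩
  rw [hp]
  dsimp only
  rcases le_or_gt x 0 with hx | hx
  · rw [zero_of_nonpos hx, mul_zero, abs_zero]
    exact mul_nonneg hK0 (rpow_nonneg le_rfl _)
  · have hg : expNegInvGlue x = exp (-x⁻¹) := by rw [expNegInvGlue, if_neg hx.not_ge]
    rw [hg, ← exp_mul, abs_mul, abs_of_pos (exp_pos (-x⁻¹))]
    calc |p.eval x⁻¹| * exp (-x⁻¹) ≤ K * exp ((1 - β) * x⁻¹) * exp (-x⁻¹) := by
          gcongr; exact hK _ (inv_nonneg.2 hx.le)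
      _ = K * exp (-x⁻¹ * β) := by rw [mul_assoc, ← exp_add]; ring_nf

end expNegInvGlue

theorem abs_iteratedDeriv_mul_le {f g : ℝ → ℝ} {n : ℕ} {x w : ℝ} {K H : ℕ → ℝ}
    (hf : ContDiff ℝ n f) (hg : ContDiff ℝ n g)
    (hfK : ∀ i, |iteratedDeriv i f x| ≤ K i * w) (hgH : ∀ j, |iteratedDeriv j g x| ≤ H j) :
    |iteratedDeriv n (fun y => f y * g y) x|
      ≤ (∑ i ∈ Finset.range (n + 1), n.choose i * K i * H (n - i)) * w := by
  rw [iteratedDeriv_fun_mul hf.contDiffAt hg.contDiffAt, Finset.sum_mul]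
  refine (Finset.abs_sum_le_sum_abs _ _).trans (Finset.sum_le_sum fun i _ => ?_)
  have hw : 0 ≤ K i * w := (abs_nonneg _).trans (hfK i)
  rw [abs_mul, abs_mul, Nat.abs_cast]
  calc (n.choose i : ℝ) * |iteratedDeriv i f x| * |iteratedDeriv (n - i) g x|
      ≤ n.choose i * (K i * w) * H (n - i) := by gcongr; exacts [hfK i, hgH _]
    _ = n.choose i * K i * H (n - i) * w := by ring

theorem abs_iteratedDeriv_comp_const_sub (f : ℝ → ℝ) (n : ℕ) (c x : ℝ) :
    |iteratedDeriv n (fun y => f (c - y)) x| = |iteratedDeriv n f (c - x)| := by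
  simp [iteratedDeriv_comp_const_sub, abs_mul]

theorem tsum_sub_eq_of_eventually_eq {F : ℕ → ℝ} {c : ℝ} (h : ∀ᶠ i in atTop, F i = c) :
    ∑' i, (F (i + 1) - F i) = c - F 0 := by
  obtain ⟨n₀, hn₀⟩ := eventually_atTop.1 h
  rw [tsum_eq_sum (s := Finset.range n₀) fun i hi => by
      rw [hn₀ i (by simpa using hi), hn₀ (i + 1) (by simp at hi; omega), sub_self],
    Finset.sum_range_sub, hn₀ n₀ le_rfl]

noncomputable section

namespace SquaredCutoff

def glueNorm (x : ℝ) : ℝ := √(expNegInvGlue x ^ 2 + expNegInvGlue (1 - x) ^ 2)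

def fall (x : ℝ) : ℝ := expNegInvGlue (1 - x) / glueNorm x

def rise (x : ℝ) : ℝ := fall (1 - x)

theorem glueNorm_sq_pos (x : ℝ) : 0 < expNegInvGlue x ^ 2 + expNegInvGlue (1 - x) ^ 2 := by
  rcases le_or_gt x 0 with hx | hx
  · have := expNegInvGlue.pos_of_pos (show 0 < 1 - x by linarith)
    positivity
  · have := expNegInvGlue.pos_of_pos hx
    positivity

theorem glueNorm_pos (x : ℝ) : 0 < glueNorm x := sqrt_pos.2 (glueNorm_sq_pos x)

theorem glueNorm_one_sub (x : ℝ) : glueNorm (1 - x) = glueNorm x := by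
  rw [glueNorm, glueNorm, sub_sub_cancel, add_comm]

theorem glueNorm_le_sqrt_two (x : ℝ) : glueNorm x ≤ √2 := by
  have h0 := expNegInvGlue.nonneg x
  have h1 := expNegInvGlue.nonneg (1 - x)
  have h2 := expNegInvGlue.le_one x
  have h3 := expNegInvGlue.le_one (1 - x)
  exact sqrt_le_sqrt (by nlinarith)

theorem expNegInvGlue_one_sub_le_glueNorm (x : ℝ) : expNegInvGlue (1 - x) ≤ glueNorm x :=
  le_sqrt_of_sq_le (le_add_of_nonneg_left (sq_nonneg _))

theorem contDiff_glueNorm : ContDiff ℝ ∞ glueNorm :=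
  ((expNegInvGlue.contDiff.pow 2).add
    ((expNegInvGlue.contDiff.comp (contDiff_const.sub contDiff_id)).pow 2)).sqrt
    fun x => (glueNorm_sq_pos x).ne'

theorem contDiff_fall : ContDiff ℝ ∞ fall :=
  (expNegInvGlue.contDiff.comp (contDiff_const.sub contDiff_id)).div contDiff_glueNorm
    fun x => (glueNorm_pos x).ne'

theorem contDiff_rise : ContDiff ℝ ∞ rise :=
  contDiff_fall.comp (contDiff_const.sub contDiff_id)

theorem fall_nonneg (x : ℝ) : 0 ≤ fall x :=
  div_nonneg (expNegInvGlue.nonneg _) (glueNorm_pos x).le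

theorem fall_le_one (x : ℝ) : fall x ≤ 1 :=
  div_le_one_of_le₀ (expNegInvGlue_one_sub_le_glueNorm x) (glueNorm_pos x).le

theorem fall_of_nonpos {x : ℝ} (hx : x ≤ 0) : fall x = 1 := by
  have hpos := expNegInvGlue.pos_of_pos (show 0 < 1 - x by linarith)
  rw [fall, glueNorm, expNegInvGlue.zero_of_nonpos hx, zero_pow two_ne_zero, zero_add,
    sqrt_sq hpos.le, div_self hpos.ne']

theorem fall_of_one_le {x : ℝ} (hx : 1 ≤ x) : fall x = 0 := by
  rw [fall, expNegInvGlue.zero_of_nonpos (by linarith), zero_div]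

theorem rise_of_nonpos {x : ℝ} (hx : x ≤ 0) : rise x = 0 := fall_of_one_le (by linarith)

theorem rise_of_one_le {x : ℝ} (hx : 1 ≤ x) : rise x = 1 := fall_of_nonpos (by linarith)

theorem fall_sq_add_rise_sq (x : ℝ) : fall x ^ 2 + rise x ^ 2 = 1 := by
  rw [rise, fall, fall, glueNorm_one_sub, sub_sub_cancel, div_pow, div_pow, ← add_div, glueNorm,
    sq_sqrt (glueNorm_sq_pos x).le, add_comm, div_self (glueNorm_sq_pos x).ne']

theorem expNegInvGlue_one_sub_le_fall (x : ℝ) : expNegInvGlue (1 - x) ≤ √2 * fall x := by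
  rw [fall, mul_div_assoc', le_div_iff₀ (glueNorm_pos x), mul_comm]
  exact mul_le_mul_of_nonneg_right (glueNorm_le_sqrt_two x) (expNegInvGlue.nonneg _)

theorem abs_iteratedDeriv_rise (n : ℕ) (x : ℝ) :
    |iteratedDeriv n rise x| = |iteratedDeriv n fall (1 - x)| :=
  abs_iteratedDeriv_comp_const_sub fall n 1 x

theorem exists_abs_iteratedDeriv_fall_le_rpow (n : ℕ) {e : ℝ} (he0 : 0 ≤ e) (he1 : e < 1) :
    ∃ B, ∀ x < 1, |iteratedDeriv n fall x| ≤ B * fall x ^ e := by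
  choose K hK0 hK using fun i => expNegInvGlue.exists_abs_iteratedDeriv_le_rpow i he1
  have hglue : ContDiff ℝ ∞ fun x => expNegInvGlue (1 - x) :=
    expNegInvGlue.contDiff.comp (contDiff_const.sub contDiff_id)
  have hinv : ContDiff ℝ ∞ fun x => (glueNorm x)⁻¹ :=
    contDiff_glueNorm.inv fun x => (glueNorm_pos x).ne'
  choose H hH using fun j => isCompact_Icc.exists_bound_of_continuousOn
    ((hinv.continuous_iteratedDeriv j (by exact_mod_cast le_top)).continuousOn (s := Icc 0 1))
  set S := ∑ i ∈ Finset.range (n + 1), n.choose i * K i * H (n - i)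
  have hS : 0 ≤ S := Finset.sum_nonneg fun i _ =>
    mul_nonneg (mul_nonneg (Nat.cast_nonneg _) (hK0 i))
      ((norm_nonneg _).trans (hH _ 0 ⟨le_rfl, zero_le_one⟩))
  refine ⟨max 1 (S * √2 ^ e), fun x hx => ?_⟩
  rcases lt_or_ge x 0 with hx0 | hx0
  · have hconst : fall =ᶠ[𝓝 x] fun _ => 1 := by
      filter_upwards [Iio_mem_nhds hx0] with y hy using fall_of_nonpos hy.le
    rw [hconst.iteratedDeriv_eq, iteratedDeriv_const, fall_of_nonpos hx0.le, one_rpow, mul_one]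
    split_ifs <;> simp
  · have hfall : fall = fun y => expNegInvGlue (1 - y) * (glueNorm y)⁻¹ :=
      funext fun y => div_eq_mul_inv _ _
    calc |iteratedDeriv n fall x| ≤ S * expNegInvGlue (1 - x) ^ e := by
          rw [hfall]
          refine abs_iteratedDeriv_mul_le
            (hglue.of_le (by exact_mod_cast le_top))
            (hinv.of_le (by exact_mod_cast le_top)) (fun i => ?_) (fun j => hH j x ⟨hx0, hx.le⟩)
          rw [abs_iteratedDeriv_comp_const_sub]
          exact hK i _
      _ ≤ S * (√2 ^ e * fall x ^ e) := by
          rw [← mul_rpow (sqrt_nonneg 2) (fall_nonneg x)]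
          exact mul_le_mul_of_nonneg_left
            (rpow_le_rpow (expNegInvGlue.nonneg _) (expNegInvGlue_one_sub_le_fall x) he0) hS
      _ ≤ max 1 (S * √2 ^ e) * fall x ^ e := by
          rw [← mul_assoc]
          gcongr
          · exact rpow_nonneg (fall_nonneg x) e
          · exact le_max_right _ _

theorem exists_abs_iteratedDeriv_fall_le (N : ℕ) :
    ∃ B : ℕ → ℝ, ∀ n ≤ N, ∀ x < 1,
      |iteratedDeriv n fall x| ≤ B n * fall x ^ ((1 : ℝ) - n / N) := by
  have key : ∀ n, ∃ b : ℝ, n ≤ N → ∀ x < 1,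
      |iteratedDeriv n fall x| ≤ b * fall x ^ ((1 : ℝ) - n / N) := by
    intro n
    rcases Nat.eq_zero_or_pos n with rfl | hn0
    · exact ⟨1, fun _ x _ => by simp [abs_of_nonneg (fall_nonneg x)]⟩
    by_cases hn : n ≤ N
    · have hN : (0 : ℝ) < N := by exact_mod_cast hn0.trans_le hn
      have hle : (n : ℝ) / N ≤ 1 := (div_le_one hN).2 (by exact_mod_cast hn)
      have hpos : 0 < (n : ℝ) / N := div_pos (by exact_mod_cast hn0) hN
      obtain ⟨b, hb⟩ := exists_abs_iteratedDeriv_fall_le_rpow n (e := 1 - n / N)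
        (by linarith) (by linarith)
      exact ⟨b, fun _ => hb⟩
    · exact ⟨0, fun h => absurd h hn⟩
  choose B hB using key
  exact ⟨B, fun n hn => hB n hn⟩

def ramp (a b y : ℝ) : ℝ := (b - a)⁻¹ * (y - a)

section ramp

variable {a b y : ℝ}

theorem ramp_nonpos (hab : a < b) (hy : y ≤ a) : ramp a b y ≤ 0 :=
  mul_nonpos_of_nonneg_of_nonpos (inv_nonneg.2 (sub_pos.2 hab).le) (sub_nonpos.2 hy)

theorem ramp_pos (hab : a < b) (hy : a < y) : 0 < ramp a b y :=
  mul_pos (inv_pos.2 (sub_pos.2 hab)) (sub_pos.2 hy)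

theorem one_le_ramp (hab : a < b) (hy : b ≤ y) : 1 ≤ ramp a b y := by
  rw [ramp, inv_mul_eq_div, one_le_div (sub_pos.2 hab)]
  linarith

theorem ramp_lt_one (hab : a < b) (hy : y < b) : ramp a b y < 1 := by
  rw [ramp, inv_mul_eq_div, div_lt_one (sub_pos.2 hab)]
  linarith

theorem ramp_mul_mul_mul {c : ℝ} (hc : c ≠ 0) : ramp (c * a) (c * b) (c * y) = ramp a b y := by
  rw [ramp, ramp, ← mul_sub, ← mul_sub, mul_inv]
  field_simp

theorem contDiff_ramp : ContDiff ℝ ∞ (ramp a b) :=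
  contDiff_const.mul (contDiff_id.sub contDiff_const)

theorem iteratedDeriv_comp_ramp {g : ℝ → ℝ} (hg : ContDiff ℝ ∞ g) (n : ℕ) :
    iteratedDeriv n (fun y => g (ramp a b y)) y
      = (b - a)⁻¹ ^ n * iteratedDeriv n g (ramp a b y) := by
  unfold ramp
  exact (congrFun (iteratedDeriv_comp_sub_const n (fun z => g ((b - a)⁻¹ * z)) a) y).trans
    (congrFun (iteratedDeriv_comp_const_mul (hg.of_le (by exact_mod_cast le_top)) _) _)

end ramp

/-- The paper's `ψ̃`. -/
def outerCutoff (A y : ℝ) : ℝ := fall (ramp (A / 4) A y)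

/-- The paper's `ψ`. -/
def shellCutoff (A y : ℝ) : ℝ := rise (ramp (1 / 4) 1 y) * outerCutoff A y

section cutoffs

variable {A y : ℝ}

theorem contDiff_outerCutoff (A : ℝ) : ContDiff ℝ ∞ (outerCutoff A) :=
  contDiff_fall.comp contDiff_ramp

theorem contDiff_shellCutoff (A : ℝ) : ContDiff ℝ ∞ (shellCutoff A) :=
  (contDiff_rise.comp contDiff_ramp).mul (contDiff_outerCutoff A)

theorem outerCutoff_mem_Icc (A y : ℝ) : outerCutoff A y ∈ Icc 0 1 :=
  ⟨fall_nonneg _, fall_le_one _⟩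

theorem shellCutoff_mem_Icc (A y : ℝ) : shellCutoff A y ∈ Icc 0 1 :=
  ⟨mul_nonneg (fall_nonneg _) (fall_nonneg _),
    mul_le_one₀ (fall_le_one _) (fall_nonneg _) (fall_le_one _)⟩

theorem outerCutoff_of_le (hA : 0 < A) (hy : y ≤ A / 4) : outerCutoff A y = 1 :=
  fall_of_nonpos (ramp_nonpos (by linarith) hy)

theorem outerCutoff_of_ge (hA : 0 < A) (hy : A ≤ y) : outerCutoff A y = 0 :=
  fall_of_one_le (one_le_ramp (by linarith) hy)

theorem shellCutoff_of_le_quarter (hy : y ≤ 1 / 4) : shellCutoff A y = 0 := by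
  rw [shellCutoff, rise_of_nonpos (ramp_nonpos (by norm_num) hy), zero_mul]

theorem shellCutoff_of_ge (hA : 0 < A) (hy : A ≤ y) : shellCutoff A y = 0 := by
  rw [shellCutoff, outerCutoff_of_ge hA hy, mul_zero]

theorem shellCutoff_eq_one (hA : 0 < A) (h1 : 1 ≤ y) (h2 : y ≤ A / 4) : shellCutoff A y = 1 := by
  rw [shellCutoff, rise_of_one_le (one_le_ramp (by norm_num) h1), outerCutoff_of_le hA h2, one_mul]

theorem outerCutoff_mul_eq_fall (hA : A ≠ 0) (z : ℝ) :
    outerCutoff A (A * z) = fall (ramp (1 / 4) 1 z) := by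
  rw [outerCutoff, ← ramp_mul_mul_mul hA (a := 1 / 4) (b := 1) (y := z), mul_one_div, mul_one]

theorem shellCutoff_sq (hA : 4 ≤ A) (z : ℝ) :
    shellCutoff A z ^ 2 = outerCutoff A z ^ 2 - outerCutoff A (A * z) ^ 2 := by
  have hA0 : 0 < A := by linarith
  have hrise := fall_sq_add_rise_sq (ramp (1 / 4) 1 z)
  rw [shellCutoff, outerCutoff_mul_eq_fall hA0.ne']
  rcases le_or_gt z (A / 4) with hz | hz
  · rw [outerCutoff_of_le hA0 hz]
    linarith
  · rw [fall_of_one_le (one_le_ramp (by norm_num) (by linarith)), rise_of_one_le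
      (one_le_ramp (by norm_num) (by linarith))]
    ring

theorem outerCutoff_sq_add_tsum_shellCutoff_sq (hA : 4 ≤ A) (y : ℝ) :
    outerCutoff A y ^ 2 + ∑' i : ℕ, shellCutoff A (A ^ (-(1 : ℤ) - i) * y) ^ 2 = 1 := by
  have hA0 : 0 < A := by linarith
  set F : ℕ → ℝ := fun i => outerCutoff A (A ^ (-(i : ℤ)) * y) ^ 2
  have hterm (i : ℕ) : shellCutoff A (A ^ (-(1 : ℤ) - i) * y) ^ 2 = F (i + 1) - F i := by
    have hnext : -(1 : ℤ) - i = -((i + 1 : ℕ) : ℤ) := by push_cast; ring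
    have hprev : 1 + (-(1 : ℤ) - i) = -(i : ℤ) := by ring
    rw [shellCutoff_sq hA, ← mul_assoc, ← zpow_one_add₀ hA0.ne', hprev, hnext]
  have hsmall : Tendsto (fun i : ℕ => A ^ (-(i : ℤ)) * y) atTop (𝓝 0) := by
    simpa [zpow_neg, ← inv_pow] using
      (tendsto_pow_atTop_nhds_zero_of_lt_one (inv_nonneg.2 hA0.le)
        (inv_lt_one_of_one_lt₀ (by linarith))).mul_const y
  have hF : ∀ᶠ i in atTop, F i = 1 := by
    filter_upwards [hsmall.eventually (eventually_le_nhds (by positivity : (0 : ℝ) < A / 4))]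
      with i hi
    simp only [F, outerCutoff_of_le hA0 hi, one_pow]
  simp only [hterm, tsum_sub_eq_of_eventually_eq hF, F, Nat.cast_zero, neg_zero, zpow_zero,
    one_mul]
  ring

theorem zpow_neg_mul_le_quarter (hA : 4 ≤ A) {m : ℤ} (hm : 2 ≤ m) (hy : y < A) :
    A ^ (-m) * y ≤ 1 / 4 := by
  have hA0 : 0 < A := by linarith
  calc A ^ (-m) * y ≤ A ^ (-m) * A := by gcongr
    _ = A ^ (1 - m) := by rw [← zpow_add_one₀ hA0.ne']; ring_nf
    _ ≤ A ^ (-1 : ℤ) := zpow_le_zpow_right₀ (by linarith) (by linarith)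
    _ ≤ 1 / 4 := by rw [zpow_neg_one, one_div]; exact inv_anti₀ (by norm_num) hA

theorem outerCutoff_mul_shellCutoff (hA : 4 ≤ A) {m : ℤ} (hm : 2 ≤ m) (y : ℝ) :
    outerCutoff A y * shellCutoff A (A ^ (-m) * y) = 0 := by
  rcases lt_or_ge y A with hy | hy
  · rw [shellCutoff_of_le_quarter (zpow_neg_mul_le_quarter hA hm hy), mul_zero]
  · rw [outerCutoff_of_ge (by linarith) hy, zero_mul]

theorem shellCutoff_mul_shellCutoff_of_add_two_le (hA : 4 ≤ A) {m m' : ℤ} (h : m + 2 ≤ m')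
    (y : ℝ) : shellCutoff A (A ^ (-m) * y) * shellCutoff A (A ^ (-m') * y) = 0 := by
  have hA0 : 0 < A := by linarith
  rcases lt_or_ge (A ^ (-m) * y) A with hy | hy
  · have hscale : A ^ (-m') * y = A ^ (-(m' - m)) * (A ^ (-m) * y) := by
      rw [← mul_assoc, ← zpow_add₀ hA0.ne']; ring_nf
    rw [hscale, shellCutoff_of_le_quarter (zpow_neg_mul_le_quarter hA (by linarith) hy), mul_zero]
  · rw [shellCutoff_of_ge hA0 hy, zero_mul]

theorem shellCutoff_mul_shellCutoff (hA : 4 ≤ A) {m m' : ℤ} (h : 2 ≤ |m - m'|) (y : ℝ) :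
    shellCutoff A (A ^ (-m) * y) * shellCutoff A (A ^ (-m') * y) = 0 := by
  rcases le_abs'.1 h with h | h
  · exact shellCutoff_mul_shellCutoff_of_add_two_le hA (by linarith) y
  · rw [mul_comm]
    exact shellCutoff_mul_shellCutoff_of_add_two_le hA (by linarith) y

variable {B e : ℝ} {n : ℕ}

theorem abs_iteratedDeriv_outerCutoff_le (hA : 0 < A)
    (hB : ∀ x < 1, |iteratedDeriv n fall x| ≤ B * fall x ^ e) (hy : y < A) :
    |iteratedDeriv n (outerCutoff A) y| ≤ (4 / 3) ^ n * B * outerCutoff A y ^ e * (A ^ n)⁻¹ := by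
  have hscale : (A - A / 4)⁻¹ ^ n = (4 / 3) ^ n * (A ^ n)⁻¹ := by
    rw [← inv_pow, ← mul_pow]; congr 1; field_simp; ring
  unfold outerCutoff
  rw [iteratedDeriv_comp_ramp contDiff_fall, abs_mul, abs_pow,
    abs_of_pos (inv_pos.2 (by linarith)), hscale]
  calc (4 / 3) ^ n * (A ^ n)⁻¹ * |iteratedDeriv n fall (ramp (A / 4) A y)|
      ≤ (4 / 3) ^ n * (A ^ n)⁻¹ * (B * fall (ramp (A / 4) A y) ^ e) := by
        gcongr; exact hB _ (ramp_lt_one (by linarith) hy)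
    _ = _ := by ring

theorem abs_iteratedDeriv_shellCutoff_le_of_lt_one (hA : 4 ≤ A)
    (hB : ∀ x < 1, |iteratedDeriv n fall x| ≤ B * fall x ^ e) (h1 : 1 / 4 < y) (h2 : y < 1) :
    |iteratedDeriv n (shellCutoff A) y| ≤ (4 / 3) ^ n * B * shellCutoff A y ^ e := by
  have hA0 : 0 < A := by linarith
  have hrise : ∀ z ≤ A / 4, shellCutoff A z = rise (ramp (1 / 4) 1 z) := fun z hz => by
    rw [shellCutoff, outerCutoff_of_le hA0 hz, mul_one]
  have hloc : shellCutoff A =ᶠ[𝓝 y] fun z => rise (ramp (1 / 4) 1 z) := by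
    filter_upwards [Iio_mem_nhds (show y < A / 4 by linarith)] with z hz using hrise z hz.le
  rw [hloc.iteratedDeriv_eq, iteratedDeriv_comp_ramp contDiff_rise, abs_mul,
    abs_iteratedDeriv_rise, hrise y (by linarith), rise]
  norm_num only [abs_pow]
  calc (4 / 3) ^ n * |iteratedDeriv n fall (1 - ramp (1 / 4) 1 y)|
      ≤ (4 / 3) ^ n * (B * fall (1 - ramp (1 / 4) 1 y) ^ e) := by
        gcongr; exact hB _ (by linarith [ramp_pos (by norm_num : (1 / 4 : ℝ) < 1) h1])
    _ = _ := by ring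

theorem abs_iteratedDeriv_shellCutoff_le_of_quarter_lt (hA : 4 ≤ A)
    (hB : ∀ x < 1, |iteratedDeriv n fall x| ≤ B * fall x ^ e) (h1 : A / 4 < y) (h2 : y < A) :
    |iteratedDeriv n (shellCutoff A) y| ≤ (4 / 3) ^ n * B * shellCutoff A y ^ e * (A ^ n)⁻¹ := by
  have hA0 : 0 < A := by linarith
  have houter : ∀ z, 1 ≤ z → shellCutoff A z = outerCutoff A z := fun z hz => by
    rw [shellCutoff, rise_of_one_le (one_le_ramp (by norm_num) hz), one_mul]
  have hloc : shellCutoff A =ᶠ[𝓝 y] outerCutoff A := by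
    filter_upwards [Ioi_mem_nhds (show 1 < y by linarith)] with z hz using houter z hz.le
  rw [hloc.iteratedDeriv_eq, houter y (by linarith)]
  exact abs_iteratedDeriv_outerCutoff_le hA0 hB h2

end cutoffs

end SquaredCutoff

end

open SquaredCutoff in
theorem cutoff_construction_general (N : ℕ) :
    ∃ C : ℕ → ℝ, ∀ A : ℝ, 8 ≤ A →
      ∃ ψt ψ : ℝ → ℝ,
        ContDiff ℝ (⊤ : ℕ∞) ψt ∧ ContDiff ℝ (⊤ : ℕ∞) ψ ∧
        (∀ y : ℝ, 0 ≤ y → ψt y ∈ Set.Icc (0:ℝ) 1 ∧ ψ y ∈ Set.Icc (0:ℝ) 1) ∧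
        -- (1)  1_{[0,A/4]} ≤ ψ̃ ≤ 1_{[0,A]}
        (∀ y ∈ Set.Icc (0:ℝ) (A/4), ψt y = 1) ∧
        (∀ y : ℝ, 0 ≤ y → A < y → ψt y = 0) ∧
        -- (2)  1_{[1,A/4]} ≤ ψ ≤ 1_{[1/4,A]}
        (∀ y ∈ Set.Icc (1:ℝ) (A/4), ψ y = 1) ∧
        (∀ y : ℝ, 0 ≤ y → (y < 1/4 ∨ A < y) → ψ y = 0) ∧
        -- (3)  squared partition of unity
        (∀ y : ℝ, 0 ≤ y → ψt y ^ 2 + ∑' i : ℕ, ψ (A ^ (-(1:ℤ) - (i:ℤ)) * y) ^ 2 = 1) ∧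
        -- (4)  disjointness of supports
        (∀ i : ℕ, 2 ≤ i → ∀ y : ℝ, 0 ≤ y → ψt y * ψ (A ^ (-(i:ℤ)) * y) = 0) ∧
        (∀ i i' : ℕ, 1 ≤ i → 1 ≤ i' → 2 ≤ |(i:ℤ) - (i':ℤ)| →
          ∀ y : ℝ, 0 ≤ y → ψ (A ^ (-(i:ℤ)) * y) * ψ (A ^ (-(i':ℤ)) * y) = 0) ∧
        -- (5)  derivative bounds
        (∀ n : ℕ, n ≤ N →
          (∀ y : ℝ, 0 ≤ y → y < A →
            |iteratedDeriv n ψt y| ≤ C n * ψt y ^ ((1:ℝ) - (n:ℝ) / (N:ℝ)) * (A ^ n)⁻¹) ∧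
          (∀ y : ℝ, 1/4 < y → y < 1 →
            |iteratedDeriv n ψ y| ≤ C n * ψ y ^ ((1:ℝ) - (n:ℝ) / (N:ℝ))) ∧
          (∀ y : ℝ, A/4 < y → y < A →
            |iteratedDeriv n ψ y| ≤ C n * ψ y ^ ((1:ℝ) - (n:ℝ) / (N:ℝ)) * (A ^ n)⁻¹)) := by
  obtain ⟨B, hB⟩ := exists_abs_iteratedDeriv_fall_le N
  refine ⟨fun n => (4 / 3) ^ n * B n, fun A hA8 => ?_⟩
  have hA : 4 ≤ A := by linarith
  have hA0 : 0 < A := by linarith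
  refine ⟨outerCutoff A, shellCutoff A, contDiff_outerCutoff A, contDiff_shellCutoff A,
    fun y _ => ⟨outerCutoff_mem_Icc A y, shellCutoff_mem_Icc A y⟩,
    fun y hy => outerCutoff_of_le hA0 hy.2, fun y _ hy => outerCutoff_of_ge hA0 hy.le,
    fun y hy => shellCutoff_eq_one hA0 hy.1 hy.2,
    fun y _ hy => hy.elim (fun h => shellCutoff_of_le_quarter h.le)
      (fun h => shellCutoff_of_ge hA0 h.le),
    fun y _ => outerCutoff_sq_add_tsum_shellCutoff_sq hA y,
    fun i hi y _ => outerCutoff_mul_shellCutoff hA (by exact_mod_cast hi) y,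
    fun i i' _ _ h y _ => shellCutoff_mul_shellCutoff hA h y,
    fun n hn => ⟨fun y _ hy => abs_iteratedDeriv_outerCutoff_le hA0 (hB n hn) hy,
      fun y h1 h2 => abs_iteratedDeriv_shellCutoff_le_of_lt_one hA (hB n hn) h1 h2,
      fun y h1 h2 => abs_iteratedDeriv_shellCutoff_le_of_quarter_lt hA (hB n hn) h1 h2⟩⟩

/-- Construction of the cutoff functions `ψ̃, ψ : [0,∞) → [0,1]` forming a squared partition of
unity at scale `A ≥ 8`, with disjointness of supports and derivative bounds
`|ψ⁽ⁿ⁾| ≤ C_n ψ^{1-n/N}` (times `A^{-n}` in the appropriate regions), with constants `C_n`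
independent of `A`. -/
theorem cutoff_construction (N : ℕ) (hN : 1 ≤ N) :
    ∃ C : ℕ → ℝ, ∀ A : ℝ, 8 ≤ A →
      ∃ ψt ψ : ℝ → ℝ,
        ContDiff ℝ (⊤ : ℕ∞) ψt ∧ ContDiff ℝ (⊤ : ℕ∞) ψ ∧
        (∀ y : ℝ, 0 ≤ y → ψt y ∈ Set.Icc (0:ℝ) 1 ∧ ψ y ∈ Set.Icc (0:ℝ) 1) ∧
        -- (1)  1_{[0,A/4]} ≤ ψ̃ ≤ 1_{[0,A]}
        (∀ y ∈ Set.Icc (0:ℝ) (A/4), ψt y = 1) ∧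
        (∀ y : ℝ, 0 ≤ y → A < y → ψt y = 0) ∧
        -- (2)  1_{[1,A/4]} ≤ ψ ≤ 1_{[1/4,A]}
        (∀ y ∈ Set.Icc (1:ℝ) (A/4), ψ y = 1) ∧
        (∀ y : ℝ, 0 ≤ y → (y < 1/4 ∨ A < y) → ψ y = 0) ∧
        -- (3)  squared partition of unity
        (∀ y : ℝ, 0 ≤ y → ψt y ^ 2 + ∑' i : ℕ, ψ (A ^ (-(1:ℤ) - (i:ℤ)) * y) ^ 2 = 1) ∧
        -- (4)  disjointness of supports
        (∀ i : ℕ, 2 ≤ i → ∀ y : ℝ, 0 ≤ y → ψt y * ψ (A ^ (-(i:ℤ)) * y) = 0) ∧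
        (∀ i i' : ℕ, 1 ≤ i → 1 ≤ i' → 2 ≤ |(i:ℤ) - (i':ℤ)| →
          ∀ y : ℝ, 0 ≤ y → ψ (A ^ (-(i:ℤ)) * y) * ψ (A ^ (-(i':ℤ)) * y) = 0) ∧
        -- (5)  derivative bounds
        (∀ n : ℕ, n ≤ N →
          (∀ y : ℝ, 0 ≤ y → y < A →
            |iteratedDeriv n ψt y| ≤ C n * ψt y ^ ((1:ℝ) - (n:ℝ) / (N:ℝ)) * (A ^ n)⁻¹) ∧
          (∀ y : ℝ, 1/4 < y → y < 1 →
            |iteratedDeriv n ψ y| ≤ C n * ψ y ^ ((1:ℝ) - (n:ℝ) / (N:ℝ))) ∧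
          (∀ y : ℝ, A/4 < y → y < A →
            |iteratedDeriv n ψ y| ≤ C n * ψ y ^ ((1:ℝ) - (n:ℝ) / (N:ℝ)) * (A ^ n)⁻¹)) :=
  cutoff_construction_general N
end

section
/- Let n_max ≥ 2 be an integer. Define r : {0,…,n_max−1} → ℝ by r(0) = 0 and r(ñ) = (n_max + ñ)/2 for 1 ≤ ñ ≤ n_max − 1, and define Υ : {0,…,n_max} → ℕ by Υ(0) = 0, Υ(n_max) = 2 + ⌈log₂ n_max⌉, and, for 1 ≤ n ≤ n_max − 1, Υ(n) = k where k ≥ 1 is an integer with (1 − 2^{1−k}) n_max < n ≤ (1 − 2^{−k}) n_max. Then: (0) for each 1 ≤ n ≤ n_max − 1 there is exactly one such k, so Υ is well defined; (a) Υ(n) ≤ 2 + ⌈log₂ n_max⌉ for every 0 ≤ n ≤ n_max; (b) whenever 0 ≤ ñ ≤ n_max − 1 and n is an integer with r(ñ) < n ≤ n_max, one has Υ(n) ≥ Υ(ñ) + 1. -/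
/-!
Writing `m = n_max - n`, the defining inequalities of `Υ(n) = k` say exactly that `2^k m` lies in
the dyadic window `[n_max, 2 n_max)`. Since `2^k m` doubles with `k`, exactly one `k` puts it in the
window. Comparing windows shows that this `k` is at most `⌈log₂ n_max⌉` (compare with `m = 1`) and
that it grows by at least one when the gap `m` is halved, which is what `n > r(ñ) = (n_max + ñ)/2`
says.
-/

def DyadicWindow (N m k : ℕ) : Prop :=
  N ≤ 2 ^ k * m ∧ 2 ^ k * m < 2 * N

theorem le_of_le_pow_mul_of_pow_mul_lt {N m j k : ℕ} (hj : N ≤ 2 ^ j * m)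
    (hk : 2 ^ k * m < 2 * N) : k ≤ j := by
  have : 2 ^ k * m < 2 ^ (j + 1) * m := by rw [pow_succ]; linarith
  exact Nat.lt_succ_iff.mp <| (Nat.pow_lt_pow_iff_right one_lt_two).mp <|
    Nat.lt_of_mul_lt_mul_right this

namespace DyadicWindow

variable {N m m' j k : ℕ}

theorem unique (hj : DyadicWindow N m j) (hk : DyadicWindow N m k) : j = k :=
  le_antisymm (le_of_le_pow_mul_of_pow_mul_lt hk.1 hj.2) (le_of_le_pow_mul_of_pow_mul_lt hj.1 hk.2)

theorem exists_of_pos_of_le (hm : 0 < m) (hmN : m ≤ N) : ∃ k, DyadicWindow N m k := by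
  have hex : ∃ k, N ≤ 2 ^ k * m :=
    ⟨N, (Nat.lt_two_pow_self).le.trans (Nat.le_mul_of_pos_right _ hm)⟩
  refine ⟨Nat.find hex, Nat.find_spec hex, ?_⟩
  rcases hfind : Nat.find hex with _ | j
  · simp only [pow_zero, one_mul]; omega
  · have hmin : ¬ N ≤ 2 ^ j * m := Nat.find_min hex (by omega)
    rw [pow_succ]; linarith

theorem one_le (hk : DyadicWindow N m k) (hmN : m < N) : 1 ≤ k := by
  rcases k with _ | k
  · simp only [DyadicWindow, pow_zero, one_mul] at hk; omega
  · omega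

theorem le_clog (hk : DyadicWindow N m k) (hm : 0 < m) : k ≤ Nat.clog 2 N :=
  le_of_le_pow_mul_of_pow_mul_lt (m := 1) (by simpa using Nat.le_pow_clog one_lt_two N)
    (lt_of_le_of_lt (Nat.mul_le_mul_left _ hm) hk.2)

theorem lt_of_two_mul_le (hj : DyadicWindow N m j) (hk : DyadicWindow N m' k)
    (hmm : 2 * m ≤ m') : k < j :=
  le_of_le_pow_mul_of_pow_mul_lt hj.1 <| calc
    2 ^ (k + 1) * m = 2 ^ k * (2 * m) := by ring
    _ ≤ 2 ^ k * m' := Nat.mul_le_mul_left _ hmm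
    _ < 2 * N := hk.2

end DyadicWindow

theorem upsilon_condition_iff {N n : ℕ} (hn : n ≤ N) (k : ℕ) :
    ((1 - (2:ℝ) ^ ((1:ℤ) - (k:ℤ))) * N < n ∧ (n:ℝ) ≤ (1 - (2:ℝ) ^ (-(k:ℤ))) * N) ↔
      DyadicWindow N (N - n) k := by
  have hx : (0:ℝ) < 2 ^ k := by positivity
  have e1 : (2:ℝ) ^ ((1:ℤ) - (k:ℤ)) = 2 / 2 ^ k := by
    rw [zpow_sub₀ two_ne_zero, zpow_one, zpow_natCast]
  have e2 : (2:ℝ) ^ (-(k:ℤ)) = 1 / 2 ^ k := by rw [zpow_neg, zpow_natCast, one_div]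
  have lower : (1 - 2 / 2 ^ k) * (N:ℝ) < n ↔ (2:ℝ) ^ k * (N - n) < 2 * N := by
    rw [sub_mul, one_mul, sub_lt_comm, div_mul_eq_mul_div, lt_div_iff₀ hx, mul_comm]
  have upper : (n:ℝ) ≤ (1 - 1 / 2 ^ k) * N ↔ (N:ℝ) ≤ 2 ^ k * (N - n) := by
    rw [sub_mul, one_mul, le_sub_comm, div_mul_eq_mul_div, one_mul, div_le_iff₀ hx, mul_comm]
  rw [e1, e2, lower, upper, ← Nat.cast_sub hn, DyadicWindow, and_comm]
  norm_cast

theorem existsUnique_upsilon_condition {N n : ℕ} (hn1 : 1 ≤ n) (hnN : n < N) :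
    ∃! k : ℕ, 1 ≤ k ∧ (1 - (2:ℝ) ^ ((1:ℤ) - (k:ℤ))) * N < n ∧
      (n:ℝ) ≤ (1 - (2:ℝ) ^ (-(k:ℤ))) * N := by
  obtain ⟨k, hk⟩ := DyadicWindow.exists_of_pos_of_le (N := N) (m := N - n) (by omega) (by omega)
  refine ⟨k, ⟨hk.one_le (by omega), (upsilon_condition_iff hnN.le k).mpr hk⟩, ?_⟩
  rintro j ⟨-, hj⟩
  exact ((upsilon_condition_iff hnN.le j).mp hj).unique hk

theorem upsilon_properties_general (nmax : ℕ) :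
    (∀ n : ℕ, 1 ≤ n → n ≤ nmax - 1 →
      ∃! k : ℕ, 1 ≤ k ∧ (1 - (2:ℝ)^((1:ℤ) - (k:ℤ))) * (nmax:ℝ) < (n:ℝ) ∧
        (n:ℝ) ≤ (1 - (2:ℝ)^(-(k:ℤ))) * (nmax:ℝ)) ∧
    ∀ Υ : ℕ → ℕ,
      Υ 0 = 0 →
      Υ nmax = 2 + Nat.clog 2 nmax →
      (∀ n : ℕ, 1 ≤ n → n ≤ nmax - 1 →
        1 ≤ Υ n ∧ (1 - (2:ℝ)^((1:ℤ) - (Υ n : ℤ))) * (nmax:ℝ) < (n:ℝ) ∧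
          (n:ℝ) ≤ (1 - (2:ℝ)^(-(Υ n : ℤ))) * (nmax:ℝ)) →
      (∀ n : ℕ, n ≤ nmax → Υ n ≤ 2 + Nat.clog 2 nmax) ∧
      (∀ nt n : ℕ, nt ≤ nmax - 1 → n ≤ nmax →
        (if nt = 0 then (0:ℝ) else ((nmax:ℝ) + (nt:ℝ))/2) < (n:ℝ) → Υ nt + 1 ≤ Υ n) := by
  refine ⟨fun n hn1 hn2 => existsUnique_upsilon_condition hn1 (by omega),
    fun Υ h0 hmax hΥ => ?_⟩
  have window : ∀ n, 1 ≤ n → n ≤ nmax - 1 → DyadicWindow nmax (nmax - n) (Υ n) :=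
    fun n hn1 hn2 => (upsilon_condition_iff (by omega) _).mp (hΥ n hn1 hn2).2
  have le_clog : ∀ n, 1 ≤ n → n ≤ nmax - 1 → Υ n ≤ Nat.clog 2 nmax :=
    fun n hn1 hn2 => (window n hn1 hn2).le_clog (by omega)
  refine ⟨fun n hn => ?_, fun nt n hnt hn hr => ?_⟩
  · rcases Nat.eq_zero_or_pos n with rfl | hn1
    · omega
    rcases hn.eq_or_lt with rfl | hlt
    · exact hmax.le
    · linarith [le_clog n hn1 (by omega)]
  rcases hn.eq_or_lt with rfl | hlt
  · rcases Nat.eq_zero_or_pos nt with rfl | hnt1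
    · omega
    · linarith [le_clog nt hnt1 hnt]
  rcases Nat.eq_zero_or_pos nt with rfl | hnt1
  · simp only [if_true, Nat.cast_pos] at hr
    rw [h0]; exact (hΥ n hr (by omega)).1
  · rw [if_neg hnt1.ne', div_lt_iff₀ two_pos] at hr
    have hgap : nmax + nt < 2 * n := by exact_mod_cast (by linarith : (nmax + nt : ℝ) < 2 * n)
    exact (window n (by omega) (by omega)).lt_of_two_mul_le (window nt hnt1 hnt) (by omega)

/-- Properties of the bookkeeping functions `r` and `Υ` from the convex integration scheme:
`Υ` is well defined by its defining property, is bounded by `2 + ⌈log₂ n_max⌉`, and increases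
by at least one whenever `n > r(nt)`. Here `⌈log₂ ·⌉ = Nat.clog 2`. -/
theorem upsilon_properties (nmax : ℕ) (h : 2 ≤ nmax) :
    (∀ n : ℕ, 1 ≤ n → n ≤ nmax - 1 →
      ∃! k : ℕ, 1 ≤ k ∧ (1 - (2:ℝ)^((1:ℤ) - (k:ℤ))) * (nmax:ℝ) < (n:ℝ) ∧
        (n:ℝ) ≤ (1 - (2:ℝ)^(-(k:ℤ))) * (nmax:ℝ)) ∧
    ∀ Υ : ℕ → ℕ,
      Υ 0 = 0 →
      Υ nmax = 2 + Nat.clog 2 nmax →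
      (∀ n : ℕ, 1 ≤ n → n ≤ nmax - 1 →
        1 ≤ Υ n ∧ (1 - (2:ℝ)^((1:ℤ) - (Υ n : ℤ))) * (nmax:ℝ) < (n:ℝ) ∧
          (n:ℝ) ≤ (1 - (2:ℝ)^(-(Υ n : ℤ))) * (nmax:ℝ)) →
      (∀ n : ℕ, n ≤ nmax → Υ n ≤ 2 + Nat.clog 2 nmax) ∧
      (∀ nt n : ℕ, nt ≤ nmax - 1 → n ≤ nmax →
        (if nt = 0 then (0:ℝ) else ((nmax:ℝ) + (nt:ℝ))/2) < (n:ℝ) → Υ nt + 1 ≤ Υ n) :=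
  upsilon_properties_general nmax
end

section
/- Let β ∈ (0, 1/2) and b > 1. Then (2−2β)/(1−2β) < 2 + 8βb/((b−1)(b(b−1)+2)) if and only if (b−1)(b(b−1)+2)/(4b) < 1 − 2β. Moreover, if in addition β ≥ 1/3 and 2βb < 1, then both inequalities hold. -/
/-- The endpoint computation in the proof of the main theorem: the target Lebesgue exponent
`(2-2β)/(1-2β)` lies strictly below the threshold `p_*(β,b) = 2 + 8βb/((b-1)(b(b-1)+2))`
if and only if `(b-1)(b(b-1)+2)/(4b) < 1-2β`; moreover both hold when `β ∈ [1/3, 1/2)` and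
`2βb < 1`. -/
theorem endpoint_exponent_computation (β b : ℝ) (hβ0 : 0 < β) (hβ : β < 1/2) (hb : 1 < b) :
    ((2 - 2*β)/(1 - 2*β) < 2 + 8*β*b/((b - 1)*(b*(b - 1) + 2)) ↔
      (b - 1)*(b*(b - 1) + 2)/(4*b) < 1 - 2*β) ∧
    (1/3 ≤ β → 2*β*b < 1 →
      ((2 - 2*β)/(1 - 2*β) < 2 + 8*β*b/((b - 1)*(b*(b - 1) + 2)) ∧
        (b - 1)*(b*(b - 1) + 2)/(4*b) < 1 - 2*β)) := by
  have hb1 : 0 < b - 1 := by linarith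
  have hD : 0 < (b - 1)*(b*(b - 1) + 2) := mul_pos hb1 (by nlinarith)
  have h12 : 0 < 1 - 2*β := by linarith
  have h4b : 0 < 4*b := by linarith
  have e1 : 2 + 8*β*b/((b - 1)*(b*(b - 1) + 2))
      = (2*((b - 1)*(b*(b - 1) + 2)) + 8*β*b)/((b - 1)*(b*(b - 1) + 2)) := by
    field_simp
  have hiff : (2 - 2*β)/(1 - 2*β) < 2 + 8*β*b/((b - 1)*(b*(b - 1) + 2)) ↔
      (b - 1)*(b*(b - 1) + 2)/(4*b) < 1 - 2*β := by
    rw [e1, div_lt_div_iff₀ h12 hD, div_lt_iff₀ h4b]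
    constructor <;> intro h <;> nlinarith
  refine ⟨hiff, fun h13 hbb => ?_⟩
  have hb32 : b < 3/2 := by nlinarith
  have hkey : (b - 1)*(b*(b - 1) + 2)/(4*b) < 1 - 2*β := by
    rw [div_lt_iff₀ h4b]
    nlinarith [mul_pos hb1 hb1]
  exact ⟨hiff.mpr hkey, hkey⟩
end
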